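/- arXiv:1405.0899 — 18 statements merged into one kernel-verified Lean document; each statement's English description precedes it below -/
import Mathlib

section
/- The family consisting of the cycles together with the cochord basis vectors, {c_α : α a chord index} ∪ {e_μ : μ a cochord index}, is a basis of ℝⁿ; likewise the family consisting of the cocycles together with the chord basis vectors, {c_μ : μ a cochord index} ∪ {e_α : α a chord index}, is a basis of ℝⁿ. Hence ℝⁿ decomposes as the (generally non-orthogonal) direct sum of the span of the cycles with the span of the cochords, and as the direct sum of the span of the cocycles with the span of the chords. -/
open Matrix

/-- Standard basis vector of `ℝⁿ` labeled by a cochord index `μ : Fin m`. -/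
def eCo (m k : ℕ) (μ : Fin m) : (Fin m ⊕ Fin k) → ℝ := Pi.single (Sum.inl μ) 1

/-- Standard basis vector of `ℝⁿ` labeled by a chord index `α : Fin k`. -/
def eCh (m k : ℕ) (α : Fin k) : (Fin m ⊕ Fin k) → ℝ := Pi.single (Sum.inr α) 1

lemma li_of_dual {η ι : Type*} [Fintype η] [Fintype ι] [DecidableEq ι]
    (b d : ι → (η → ℝ)) (h : ∀ i j, d i ⬝ᵥ b j = if i = j then 1 else 0) :
    LinearIndependent ℝ b := by
  rw [Fintype.linearIndependent_iff]
  intro g hg i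
  let φ : (η → ℝ) →ₗ[ℝ] ℝ :=
    { toFun := fun x => d i ⬝ᵥ x
      map_add' := fun x y => dotProduct_add _ x y
      map_smul' := fun c x => by simp [dotProduct_smul] }
  have := congrArg φ hg
  rw [map_sum, map_zero] at this
  simpa [φ, h, Finset.sum_ite_eq'] using this

/-- The cycles together with the cochord basis vectors form a basis of `ℝⁿ`; likewise the
cocycles together with the chord basis vectors form a basis of `ℝⁿ`. Hence `ℝⁿ` is the
(generally non-orthogonal) direct sum of the span of the cycles with the span of the cochords,
and of the span of the cocycles with the span of the chords. -/
theorem statement0 (m k : ℕ)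
    (ccy : Fin k → (Fin m ⊕ Fin k) → ℝ) (cco : Fin m → (Fin m ⊕ Fin k) → ℝ)
    (hch : ∀ α α' : Fin k, eCh m k α ⬝ᵥ ccy α' = if α = α' then 1 else 0)
    (hco : ∀ μ μ' : Fin m, eCo m k μ ⬝ᵥ cco μ' = if μ = μ' then 1 else 0)
    (hcc : ∀ (α : Fin k) (μ : Fin m), ccy α ⬝ᵥ cco μ = 0)
    :
    (LinearIndependent ℝ (Sum.elim ccy (eCo m k)) ∧
      Submodule.span ℝ (Set.range (Sum.elim ccy (eCo m k))) = ⊤) ∧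
    (LinearIndependent ℝ (Sum.elim cco (eCh m k)) ∧
      Submodule.span ℝ (Set.range (Sum.elim cco (eCh m k))) = ⊤) ∧
    IsCompl (Submodule.span ℝ (Set.range ccy)) (Submodule.span ℝ (Set.range (eCo m k))) ∧
    IsCompl (Submodule.span ℝ (Set.range cco)) (Submodule.span ℝ (Set.range (eCh m k))) := by
  have hEE : ∀ (α : Fin k) (μ : Fin m), eCh m k α ⬝ᵥ eCo m k μ = 0 := by
    intro α μ
    simp [eCh, eCo, dotProduct_single]
  have li1 : LinearIndependent ℝ (Sum.elim ccy (eCo m k)) := by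
    apply li_of_dual _ (Sum.elim (eCh m k) cco)
    rintro (α | μ) (α' | μ')
    · simpa using hch α α'
    · simpa using hEE α μ'
    · have : eCo m k μ ≠ 0 ∨ True := Or.inr trivial
      have := hcc α' μ
      rw [dotProduct_comm] at this
      simpa using this
    · have := hco μ' μ
      rw [dotProduct_comm] at this
      simp [this, eq_comm]
  have li2 : LinearIndependent ℝ (Sum.elim cco (eCh m k)) := by
    apply li_of_dual _ (Sum.elim (eCo m k) ccy)
    rintro (μ | α) (μ' | α')
    · simpa using hco μ μ'
    · have := hEE α' μ
      rw [dotProduct_comm] at this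
      simpa using this
    · simpa using hcc α μ'
    · have := hch α' α
      rw [dotProduct_comm] at this
      simp [this, eq_comm]
  have card1 : Fintype.card (Fin k ⊕ Fin m) =
      Module.finrank ℝ ((Fin m ⊕ Fin k) → ℝ) := by
    simp [Module.finrank_fintype_fun_eq_card]
    omega
  have card2 : Fintype.card (Fin m ⊕ Fin k) =
      Module.finrank ℝ ((Fin m ⊕ Fin k) → ℝ) := by
    simp [Module.finrank_fintype_fun_eq_card]
  have sp1 := li1.span_eq_top_of_card_eq_finrank' card1
  have sp2 := li2.span_eq_top_of_card_eq_finrank' card2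
  refine ⟨⟨li1, sp1⟩, ⟨li2, sp2⟩, ?_, ?_⟩
  · constructor
    · exact (linearIndependent_sum.mp li1).2.2
    · rw [codisjoint_iff, ← Submodule.span_union, ← Set.Sum.elim_range]
      exact sp1
  · constructor
    · exact (linearIndependent_sum.mp li2).2.2
    · rw [codisjoint_iff, ← Submodule.span_union, ← Set.Sum.elim_range]
      exact sp2
end

section
/- The operators P and Q are complementary oblique projections: P² = P, Q² = Q, PQ = QP = 0, and P + Q = I, where I is the identity operator on ℝⁿ. -/
open Matrix

/-- The cycle projection `P = Σ_α c_α e_αᵀ`. -/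
def cycProj (m k : ℕ) (ccy : Fin k → (Fin m ⊕ Fin k) → ℝ) :
    Matrix (Fin m ⊕ Fin k) (Fin m ⊕ Fin k) ℝ :=
  ∑ α, vecMulVec (ccy α) (eCh m k α)

/-- The cocycle projection `Q = Σ_μ e_μ c_μᵀ`. -/
def cocProj (m k : ℕ) (cco : Fin m → (Fin m ⊕ Fin k) → ℝ) :
    Matrix (Fin m ⊕ Fin k) (Fin m ⊕ Fin k) ℝ :=
  ∑ μ, vecMulVec (eCo m k μ) (cco μ)

lemma vmv_mul {n : Type*} [Fintype n] [DecidableEq n]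
    (a b c d : n → ℝ) :
    vecMulVec a b * vecMulVec c d = (b ⬝ᵥ c) • vecMulVec a d := by
  ext i j
  simp only [Matrix.mul_apply, vecMulVec_apply, Matrix.smul_apply, dotProduct,
    Finset.sum_mul, smul_eq_mul]
  exact Finset.sum_congr rfl fun l _ => by ring

lemma eCh_dot_eCo (m k : ℕ) (α : Fin k) (μ : Fin m) :
    eCh m k α ⬝ᵥ eCo m k μ = 0 := by
  simp [eCh, eCo, dotProduct, Pi.single_apply]

/-- `P` and `Q` are complementary oblique projections: `P² = P`, `Q² = Q`,
`PQ = QP = 0`, and `P + Q = I`. -/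
theorem statement1 (m k : ℕ)
    (ccy : Fin k → (Fin m ⊕ Fin k) → ℝ) (cco : Fin m → (Fin m ⊕ Fin k) → ℝ)
    (hch : ∀ α α' : Fin k, eCh m k α ⬝ᵥ ccy α' = if α = α' then 1 else 0)
    (hco : ∀ μ μ' : Fin m, eCo m k μ ⬝ᵥ cco μ' = if μ = μ' then 1 else 0)
    (hcc : ∀ (α : Fin k) (μ : Fin m), ccy α ⬝ᵥ cco μ = 0)
    :
    cycProj m k ccy * cycProj m k ccy = cycProj m k ccy ∧
    cocProj m k cco * cocProj m k cco = cocProj m k cco ∧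
    cycProj m k ccy * cocProj m k cco = 0 ∧
    cocProj m k cco * cycProj m k ccy = 0 ∧
    cycProj m k ccy + cocProj m k cco = 1 := by
  have hchv : ∀ (α : Fin k) (α' : Fin k), ccy α' (Sum.inr α) = if α = α' then 1 else 0 := by
    intro α α'
    have := hch α α'
    simpa [eCh, dotProduct, Pi.single_apply] using this
  have hcov : ∀ (μ μ' : Fin m), cco μ' (Sum.inl μ) = if μ = μ' then 1 else 0 := by
    intro μ μ'
    have := hco μ μ'
    simpa [eCo, dotProduct, Pi.single_apply] using this
  refine ⟨?_, ?_, ?_, ?_, ?_⟩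
  · rw [cycProj, Finset.sum_mul_sum]
    simp only [vmv_mul, hch]
    simp [Finset.sum_ite_eq, ite_smul]
  · rw [cocProj, Finset.sum_mul_sum]
    simp only [vmv_mul]
    have : ∀ μ μ' : Fin m, cco μ ⬝ᵥ eCo m k μ' = if μ' = μ then 1 else 0 := by
      intro μ μ'; rw [dotProduct_comm]; exact hco μ' μ
    simp only [this]
    simp [Finset.sum_ite_eq, ite_smul]
  · rw [cycProj, cocProj, Finset.sum_mul_sum]
    simp [vmv_mul, eCh_dot_eCo]
  · rw [cycProj, cocProj, Finset.sum_mul_sum]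
    have : ∀ (μ : Fin m) (α : Fin k), cco μ ⬝ᵥ ccy α = 0 := by
      intro μ α; rw [dotProduct_comm]; exact hcc α μ
    simp [vmv_mul, this]
  · ext i j
    cases i with
    | inl μ =>
      cases j with
      | inl ν =>
        simp [cycProj, cocProj, Matrix.sum_apply, vecMulVec_apply, eCh, eCo,
          Pi.single_apply, Matrix.one_apply, hcov, eq_comm]
      | inr β =>
        simp only [cycProj, cocProj, Matrix.add_apply, Matrix.sum_apply, vecMulVec_apply,
          eCh, eCo, Pi.single_apply, Matrix.one_apply]
        have key : ccy β (Sum.inl μ) + cco μ (Sum.inr β) = 0 := by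
          have h := hcc β μ
          rw [show ccy β ⬝ᵥ cco μ = ∑ i, ccy β i * cco μ i from rfl,
            Fintype.sum_sum_type] at h
          have hl : (∑ ν : Fin m, ccy β (Sum.inl ν) * cco μ (Sum.inl ν)) = ccy β (Sum.inl μ) := by
            have e : ∀ ν : Fin m, ccy β (Sum.inl ν) * cco μ (Sum.inl ν)
                = if ν = μ then ccy β (Sum.inl ν) else 0 := by
              intro ν; rw [hcov ν μ]; split <;> simp
            simp [e]
          have hr : (∑ α : Fin k, ccy β (Sum.inr α) * cco μ (Sum.inr α)) = cco μ (Sum.inr β) := by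
            have e : ∀ α : Fin k, ccy β (Sum.inr α) * cco μ (Sum.inr α)
                = if α = β then cco μ (Sum.inr α) else 0 := by
              intro α; rw [hchv α β]; split <;> simp
            simp [e]
          rw [hl, hr] at h; exact h
        simpa [Pi.single_apply] using key
    | inr β =>
      cases j with
      | inl ν =>
        simp [cycProj, cocProj, Matrix.sum_apply, vecMulVec_apply, eCh, eCo,
          Pi.single_apply, Matrix.one_apply]
      | inr α =>
        simp [cycProj, cocProj, Matrix.sum_apply, vecMulVec_apply, eCh, eCo,
          Pi.single_apply, Matrix.one_apply, hchv, eq_comm]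
end

section
/- The range of Q equals the kernel of P and equals the span of the cochord basis vectors {e_μ}; the kernel of Q equals the range of P and equals the span of the cycles {c_α}. -/
open Matrix

lemma cyc_apply (m k : ℕ) (ccy : Fin k → (Fin m ⊕ Fin k) → ℝ)
    (x : (Fin m ⊕ Fin k) → ℝ) :
    (cycProj m k ccy).mulVecLin x = ∑ α, x (Sum.inr α) • ccy α := by
  funext i
  simp only [mulVecLin_apply, Matrix.mulVec, dotProduct, cycProj, Matrix.sum_apply,
    vecMulVec_apply, eCh, Pi.single_apply, Finset.sum_mul, Finset.sum_apply, Pi.smul_apply,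
    smul_eq_mul]
  rw [Finset.sum_comm]
  congr 1; funext α
  rw [Finset.sum_eq_single (Sum.inr α)] <;> simp +contextual [mul_comm]

lemma coc_apply (m k : ℕ) (cco : Fin m → (Fin m ⊕ Fin k) → ℝ)
    (x : (Fin m ⊕ Fin k) → ℝ) :
    (cocProj m k cco).mulVecLin x = ∑ μ, (cco μ ⬝ᵥ x) • eCo m k μ := by
  funext i
  simp only [mulVecLin_apply, Matrix.mulVec, dotProduct, cocProj, Matrix.sum_apply,
    vecMulVec_apply, Pi.smul_apply, smul_eq_mul, Finset.sum_mul]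
  rw [Finset.sum_comm]
  simp only [Finset.sum_apply, Pi.smul_apply, smul_eq_mul, Finset.mul_sum]
  congr 1; funext μ
  rw [Finset.sum_mul]
  congr 1; funext j; ring

/-- The range of `Q` equals the kernel of `P` and equals the span of the cochords;
the kernel of `Q` equals the range of `P` and equals the span of the cycles. -/
theorem statement2 (m k : ℕ)
    (ccy : Fin k → (Fin m ⊕ Fin k) → ℝ) (cco : Fin m → (Fin m ⊕ Fin k) → ℝ)
    (hch : ∀ α α' : Fin k, eCh m k α ⬝ᵥ ccy α' = if α = α' then 1 else 0)
    (hco : ∀ μ μ' : Fin m, eCo m k μ ⬝ᵥ cco μ' = if μ = μ' then 1 else 0)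
    (hcc : ∀ (α : Fin k) (μ : Fin m), ccy α ⬝ᵥ cco μ = 0)
    :
    LinearMap.range (cocProj m k cco).mulVecLin = LinearMap.ker (cycProj m k ccy).mulVecLin ∧
    LinearMap.range (cocProj m k cco).mulVecLin = Submodule.span ℝ (Set.range (eCo m k)) ∧
    LinearMap.ker (cocProj m k cco).mulVecLin = LinearMap.range (cycProj m k ccy).mulVecLin ∧
    LinearMap.ker (cocProj m k cco).mulVecLin = Submodule.span ℝ (Set.range ccy) := by
  have hch' : ∀ α α' : Fin k, ccy α' (Sum.inr α) = if α = α' then 1 else 0 := by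
    intro α α'; have h := hch α α'
    rwa [eCh, single_dotProduct, one_mul] at h
  have hco' : ∀ μ μ' : Fin m, cco μ' (Sum.inl μ) = if μ = μ' then 1 else 0 := by
    intro μ μ'; have h := hco μ μ'
    rwa [eCo, single_dotProduct, one_mul] at h
  have hcc' : ∀ (α : Fin k) (μ : Fin m),
      ccy α (Sum.inl μ) + cco μ (Sum.inr α) = 0 := by
    intro α μ
    have h := hcc α μ
    rw [dotProduct, Fintype.sum_sum_type] at h
    simpa [hch', hco', ite_mul, mul_ite] using h
  set P := (cycProj m k ccy).mulVecLin with hPdef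
  set Q := (cocProj m k cco).mulVecLin with hQdef
  have hPQzeroV : ∀ x, P (Q x) = 0 := by
    intro x
    rw [hPdef, hQdef, cyc_apply, coc_apply]
    apply Finset.sum_eq_zero
    intro α _
    simp [eCo, Pi.single_apply]
  have hQPzeroV : ∀ x, Q (P x) = 0 := by
    intro x
    rw [hPdef, hQdef, cyc_apply, coc_apply]
    apply Finset.sum_eq_zero
    intro μ _
    have : cco μ ⬝ᵥ ∑ α, x (Sum.inr α) • ccy α = 0 := by
      simp only [dotProduct, Finset.sum_apply, Pi.smul_apply, smul_eq_mul, Finset.mul_sum]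
      rw [Finset.sum_comm]
      apply Finset.sum_eq_zero
      intro α _
      have h := hcc α μ
      rw [dotProduct] at h
      calc ∑ j, cco μ j * (x (Sum.inr α) * ccy α j)
          = x (Sum.inr α) * ∑ j, ccy α j * cco μ j := by
            rw [Finset.mul_sum]; congr 1; funext j; ring
        _ = 0 := by rw [h, mul_zero]
    rw [this, zero_smul]
  have hsum : ∀ x, P x + Q x = x := by
    intro x
    rw [hPdef, hQdef, cyc_apply, coc_apply]
    funext i
    cases i with
    | inl ν =>
      simp only [Pi.add_apply, Finset.sum_apply, Pi.smul_apply, smul_eq_mul, eCo,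
        Pi.single_apply, Sum.inl.injEq, mul_ite, mul_one, mul_zero]
      rw [Finset.sum_ite_eq Finset.univ ν (fun μ => cco μ ⬝ᵥ x)]
      simp only [Finset.mem_univ, if_true]
      rw [dotProduct, Fintype.sum_sum_type]
      simp only [hco', ite_mul, one_mul, zero_mul]
      rw [Finset.sum_ite_eq' Finset.univ ν (fun μ => x (Sum.inl μ))]
      simp only [Finset.mem_univ, if_true]
      have : ∀ α : Fin k, x (Sum.inr α) * ccy α (Sum.inl ν)
          + cco ν (Sum.inr α) * x (Sum.inr α) = 0 := by
        intro α
        have h := hcc' α ν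
        linear_combination x (Sum.inr α) * h
      have hz : (∑ α, x (Sum.inr α) * ccy α (Sum.inl ν))
          + ∑ α, cco ν (Sum.inr α) * x (Sum.inr α) = 0 := by
        rw [← Finset.sum_add_distrib]
        exact Finset.sum_eq_zero fun α _ => this α
      linarith [hz]
    | inr β =>
      simp only [Pi.add_apply, Finset.sum_apply, Pi.smul_apply, smul_eq_mul, eCo,
        Pi.single_apply, hch', mul_ite, mul_one, mul_zero]
      rw [Finset.sum_ite_eq Finset.univ β (fun α => x (Sum.inr α))]
      simp
  have hP_ccy : ∀ α, P (ccy α) = ccy α := by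
    intro α
    rw [hPdef, cyc_apply]
    simp [hch', ite_smul, Finset.sum_ite_eq]
  have hQ_eCo : ∀ μ, Q (eCo m k μ) = eCo m k μ := by
    intro μ
    rw [hQdef, coc_apply]
    have : ∀ μ', cco μ' ⬝ᵥ eCo m k μ = if μ = μ' then 1 else 0 := by
      intro μ'; rw [dotProduct_comm]; exact hco μ μ'
    simp [this, ite_smul, Finset.sum_ite_eq]
  have h1 : LinearMap.range Q = LinearMap.ker P := by
    ext x
    constructor
    · rintro ⟨y, rfl⟩
      exact LinearMap.mem_ker.mpr (hPQzeroV y)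
    · intro hx
      refine ⟨x, ?_⟩
      have := hsum x
      rw [LinearMap.mem_ker.mp hx, zero_add] at this
      exact this
  have h2 : LinearMap.range Q = Submodule.span ℝ (Set.range (eCo m k)) := by
    apply le_antisymm
    · rintro _ ⟨y, rfl⟩
      rw [hQdef, coc_apply]
      exact Submodule.sum_mem _ fun μ _ =>
        Submodule.smul_mem _ _ (Submodule.subset_span ⟨μ, rfl⟩)
    · rw [Submodule.span_le]
      rintro _ ⟨μ, rfl⟩
      exact ⟨eCo m k μ, hQ_eCo μ⟩
  have h3 : LinearMap.ker Q = LinearMap.range P := by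
    ext x
    constructor
    · intro hx
      refine ⟨x, ?_⟩
      have := hsum x
      rw [LinearMap.mem_ker.mp hx, add_zero] at this
      exact this
    · rintro ⟨y, rfl⟩
      exact LinearMap.mem_ker.mpr (hQPzeroV y)
  have h4 : LinearMap.range P = Submodule.span ℝ (Set.range ccy) := by
    apply le_antisymm
    · rintro _ ⟨y, rfl⟩
      rw [hPdef, cyc_apply]
      exact Submodule.sum_mem _ fun α _ =>
        Submodule.smul_mem _ _ (Submodule.subset_span ⟨α, rfl⟩)
    · rw [Submodule.span_le]
      rintro _ ⟨α, rfl⟩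
      exact ⟨ccy α, hP_ccy α⟩
  exact ⟨h1, h2, h3, h3.trans h4⟩
end

section
/- For every cochord index μ and every chord index α, the mutual projections of cycles onto cochords and of cocycles onto chords obey ⟨e_μ, c_α⟩ + ⟨c_μ, e_α⟩ = 0. -/
open Matrix

lemma eCo_dot (m k : ℕ) (μ : Fin m) (v : (Fin m ⊕ Fin k) → ℝ) :
    eCo m k μ ⬝ᵥ v = v (Sum.inl μ) := by
  simp [eCo, dotProduct, Pi.single_apply]

lemma eCh_dot (m k : ℕ) (α : Fin k) (v : (Fin m ⊕ Fin k) → ℝ) :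
    eCh m k α ⬝ᵥ v = v (Sum.inr α) := by
  simp [eCh, dotProduct, Pi.single_apply]

/-- Mutual superpositions: `⟨e_μ, c_α⟩ + ⟨c_μ, e_α⟩ = 0` for every cochord index `μ`
and chord index `α`. -/
theorem statement3 (m k : ℕ)
    (ccy : Fin k → (Fin m ⊕ Fin k) → ℝ) (cco : Fin m → (Fin m ⊕ Fin k) → ℝ)
    (hch : ∀ α α' : Fin k, eCh m k α ⬝ᵥ ccy α' = if α = α' then 1 else 0)
    (hco : ∀ μ μ' : Fin m, eCo m k μ ⬝ᵥ cco μ' = if μ = μ' then 1 else 0)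
    (hcc : ∀ (α : Fin k) (μ : Fin m), ccy α ⬝ᵥ cco μ = 0)
    :
    ∀ (μ : Fin m) (α : Fin k), eCo m k μ ⬝ᵥ ccy α + cco μ ⬝ᵥ eCh m k α = 0 := by
  intro μ α
  have hcoapp : ∀ μ' ν : Fin m, cco μ' (Sum.inl ν) = if ν = μ' then 1 else 0 := by
    intro μ' ν; have := hco ν μ'; rwa [eCo_dot] at this
  have hchapp : ∀ α' β : Fin k, ccy α' (Sum.inr β) = if β = α' then 1 else 0 := by
    intro α' β; have := hch β α'; rwa [eCh_dot] at this
  have h := hcc α μ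
  rw [dotProduct, Fintype.sum_sum_type] at h
  simp only [hcoapp, hchapp, mul_ite, mul_one, mul_zero, ite_mul, one_mul, zero_mul,
    Finset.sum_ite_eq', Finset.mem_univ, if_true] at h
  have h2 : cco μ ⬝ᵥ eCh m k α = cco μ (Sum.inr α) := by
    simp [eCh, dotProduct, Pi.single_apply]
  rw [eCo_dot, h2]
  linarith
end

section
/- The cycle 2-form and the cocycle 2-form coincide: for all vectors v, w ∈ ℝⁿ, Σ_α (⟨c_α, v⟩⟨e_α, w⟩ − ⟨e_α, v⟩⟨c_α, w⟩) = Σ_μ (⟨c_μ, v⟩⟨e_μ, w⟩ − ⟨e_μ, v⟩⟨c_μ, w⟩), where the first sum runs over chord indices α and the second over cochord indices μ. -/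
open Matrix

/-- The cycle 2-form and the cocycle 2-form coincide. -/
theorem statement4 (m k : ℕ)
    (ccy : Fin k → (Fin m ⊕ Fin k) → ℝ) (cco : Fin m → (Fin m ⊕ Fin k) → ℝ)
    (hch : ∀ α α' : Fin k, eCh m k α ⬝ᵥ ccy α' = if α = α' then 1 else 0)
    (hco : ∀ μ μ' : Fin m, eCo m k μ ⬝ᵥ cco μ' = if μ = μ' then 1 else 0)
    (hcc : ∀ (α : Fin k) (μ : Fin m), ccy α ⬝ᵥ cco μ = 0)
    :
    ∀ v w : (Fin m ⊕ Fin k) → ℝ,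
      ∑ α : Fin k, ((ccy α ⬝ᵥ v) * (eCh m k α ⬝ᵥ w) - (eCh m k α ⬝ᵥ v) * (ccy α ⬝ᵥ w)) =
      ∑ μ : Fin m, ((cco μ ⬝ᵥ v) * (eCo m k μ ⬝ᵥ w) - (eCo m k μ ⬝ᵥ v) * (cco μ ⬝ᵥ w)) := by
  intro v w
  have hc1 : ∀ (α α' : Fin k), ccy α' (Sum.inr α) = if α = α' then 1 else 0 := by
    intro α α'
    have := hch α α'
    simpa [eCh, dotProduct, Pi.single_apply] using this
  have hc2 : ∀ (μ μ' : Fin m), cco μ' (Sum.inl μ) = if μ = μ' then 1 else 0 := by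
    intro μ μ'
    have := hco μ μ'
    simpa [eCo, dotProduct, Pi.single_apply] using this
  have hcc' : ∀ (α : Fin k) (μ : Fin m), cco μ (Sum.inr α) = - ccy α (Sum.inl μ) := by
    intro α μ
    have h := hcc α μ
    rw [dotProduct, Fintype.sum_sum_type] at h
    simp only [hc2, hc1, mul_ite, mul_one, mul_zero, ite_mul, one_mul, zero_mul,
      Finset.sum_ite_eq, Finset.sum_ite_eq', Finset.mem_univ, if_true] at h
    linarith
  have hdv : ∀ (x : (Fin m ⊕ Fin k) → ℝ) (α : Fin k),
      ccy α ⬝ᵥ x = (∑ μ, ccy α (Sum.inl μ) * x (Sum.inl μ)) + x (Sum.inr α) := by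
    intro x α
    rw [dotProduct, Fintype.sum_sum_type]
    congr 1
    simp [hc1, ite_mul]
  have hdc : ∀ (x : (Fin m ⊕ Fin k) → ℝ) (μ : Fin m),
      cco μ ⬝ᵥ x = x (Sum.inl μ) + ∑ α, cco μ (Sum.inr α) * x (Sum.inr α) := by
    intro x μ
    rw [dotProduct, Fintype.sum_sum_type]
    congr 1
    simp [hc2, ite_mul]
  have he1 : ∀ (x : (Fin m ⊕ Fin k) → ℝ) (α : Fin k), eCh m k α ⬝ᵥ x = x (Sum.inr α) := by
    intro x α; simp [eCh, dotProduct, Pi.single_apply]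
  have he2 : ∀ (x : (Fin m ⊕ Fin k) → ℝ) (μ : Fin m), eCo m k μ ⬝ᵥ x = x (Sum.inl μ) := by
    intro x μ; simp [eCo, dotProduct, Pi.single_apply]
  simp only [hdv, hdc, he1, he2, hcc']
  have L : ∀ α : Fin k,
      ((∑ μ, ccy α (Sum.inl μ) * v (Sum.inl μ)) + v (Sum.inr α)) * w (Sum.inr α) -
        v (Sum.inr α) * ((∑ μ, ccy α (Sum.inl μ) * w (Sum.inl μ)) + w (Sum.inr α)) =
      ∑ μ, ccy α (Sum.inl μ) * (v (Sum.inl μ) * w (Sum.inr α) - v (Sum.inr α) * w (Sum.inl μ)) := by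
    intro α
    rw [add_mul, mul_add, Finset.sum_mul, Finset.mul_sum, add_sub_add_right_eq_sub,
      ← Finset.sum_sub_distrib]
    exact Finset.sum_congr rfl fun μ _ => by ring
  have R : ∀ μ : Fin m,
      (v (Sum.inl μ) + ∑ α, -ccy α (Sum.inl μ) * v (Sum.inr α)) * w (Sum.inl μ) -
        v (Sum.inl μ) * (w (Sum.inl μ) + ∑ α, -ccy α (Sum.inl μ) * w (Sum.inr α)) =
      ∑ α, ccy α (Sum.inl μ) * (v (Sum.inl μ) * w (Sum.inr α) - v (Sum.inr α) * w (Sum.inl μ)) := by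
    intro μ
    rw [add_mul, mul_add, Finset.sum_mul, Finset.mul_sum, sub_add_eq_sub_sub,
      add_sub_cancel_left, ← Finset.sum_sub_distrib]
    exact Finset.sum_congr rfl fun α _ => by ring
  rw [Finset.sum_congr rfl fun α _ => L α, Finset.sum_congr rfl fun μ _ => R μ,
    Finset.sum_comm]
end

section
/- Every nonzero eigenvalue of P†P is greater than or equal to 1: if P†P w = λ w with w ≠ 0 and λ ≠ 0, then λ ≥ 1. -/
/-!
Since `P†(P w) = l • w` with `l ≠ 0`, the vector `w` lies in the range of the projection `P†`,
so `P† w = w`. Hence `‖w‖² = ⟪P w, w⟫ ≤ ‖P w‖ ‖w‖` by Cauchy–Schwarz, i.e. `‖w‖ ≤ ‖P w‖`,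
while `‖P w‖² = ⟪w, P†P w⟫ = l ‖w‖²`.
-/

namespace LinearMap

variable {V W : Type*} [NormedAddCommGroup V] [InnerProductSpace ℝ V] [FiniteDimensional ℝ V]
  [NormedAddCommGroup W] [InnerProductSpace ℝ W] [FiniteDimensional ℝ W]

theorem norm_apply_sq_eq_of_adjoint_comp_apply_eq_smul (T : V →ₗ[ℝ] W) {l : ℝ} {w : V}
    (heig : (adjoint T ∘ₗ T) w = l • w) : ‖T w‖ ^ 2 = l * ‖w‖ ^ 2 := by
  rw [← real_inner_self_eq_norm_sq, ← real_inner_self_eq_norm_sq, ← adjoint_inner_right,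
    ← comp_apply, heig, real_inner_smul_right]

theorem norm_le_norm_apply_of_adjoint_apply_eq_self (T : V →ₗ[ℝ] V) {w : V}
    (hw : adjoint T w = w) : ‖w‖ ≤ ‖T w‖ := by
  rcases eq_or_ne w 0 with rfl | hw0
  · simp
  have hsq : ‖w‖ * ‖w‖ ≤ ‖T w‖ * ‖w‖ :=
    calc ‖w‖ * ‖w‖ = inner ℝ w (adjoint T w) := by rw [hw, real_inner_self_eq_norm_mul_norm]
      _ = inner ℝ (T w) w := adjoint_inner_right T w w
      _ ≤ ‖T w‖ * ‖w‖ := real_inner_le_norm _ _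
  exact le_of_mul_le_mul_right hsq (norm_pos_iff.mpr hw0)

theorem adjoint_apply_eq_self_of_adjoint_comp_apply_eq_smul {P : V →ₗ[ℝ] V} (hP : P ∘ₗ P = P)
    {l : ℝ} {w : V} (hl : l ≠ 0) (heig : (adjoint P ∘ₗ P) w = l • w) : adjoint P w = w := by
  have hP' : adjoint P ∘ₗ adjoint P = adjoint P := by rw [← adjoint_comp, hP]
  have : l • adjoint P w = l • w := by
    rw [← map_smul, ← heig, ← comp_apply (adjoint P), ← comp_assoc, hP']
  exact smul_right_injective V hl this

end LinearMap

/-- Every nonzero eigenvalue of `P†P` is at least `1`, for an (oblique) projection `P`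
on a finite-dimensional real inner product space. -/
theorem statement6 {V : Type*} [NormedAddCommGroup V] [InnerProductSpace ℝ V]
    [FiniteDimensional ℝ V] (P : V →ₗ[ℝ] V) (hP : P ∘ₗ P = P)
    (l : ℝ) (w : V) (hw : w ≠ 0) (hl : l ≠ 0)
    (heig : (LinearMap.adjoint P ∘ₗ P) w = l • w) : 1 ≤ l := by
  have hfix := LinearMap.adjoint_apply_eq_self_of_adjoint_comp_apply_eq_smul hP hl heig
  have hle : ‖w‖ ^ 2 ≤ ‖P w‖ ^ 2 := by
    gcongr
    exact LinearMap.norm_le_norm_apply_of_adjoint_apply_eq_self P hfix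
  rw [LinearMap.norm_apply_sq_eq_of_adjoint_comp_apply_eq_smul P heig] at hle
  have hw2 : 0 < ‖w‖ ^ 2 := by positivity
  exact le_of_mul_le_mul_right ((one_mul _).trans_le hle) hw2
end

section
/- A vector w ∈ V satisfies P†P w = w if and only if P w = w and P† w = w. -/
/-!
If `P†P w = w`, then `‖P w‖² = ⟪P†P w, w⟫ = ‖w‖²`, and idempotence gives
`⟪P w, w⟫ = ⟪P w, P†(P w)⟫ = ⟪P (P w), P w⟫ = ‖P w‖²`. Expanding `‖P w - w‖²` then yields `0`,
so `P w = w`, and finally `P† w = P†(P w) = w`.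
-/

open scoped InnerProductSpace

namespace LinearMap

variable {𝕜 E : Type*} [RCLike 𝕜] [NormedAddCommGroup E] [InnerProductSpace 𝕜 E]
  [FiniteDimensional 𝕜 E] {P : E →ₗ[𝕜] E} {w : E}

theorem norm_apply_eq_of_adjoint_apply_apply_eq (h : adjoint P (P w) = w) : ‖P w‖ = ‖w‖ := by
  have hsq : ‖P w‖ ^ 2 = ‖w‖ ^ 2 := by
    rw [← inner_self_eq_norm_sq (𝕜 := 𝕜), ← inner_self_eq_norm_sq (𝕜 := 𝕜),
      ← adjoint_inner_left, h]
  exact (sq_eq_sq₀ (norm_nonneg _) (norm_nonneg _)).mp hsq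

theorem inner_apply_self_eq_of_adjoint_apply_apply_eq (hP : IsIdempotentElem P)
    (h : adjoint P (P w) = w) : ⟪P w, w⟫_𝕜 = ⟪P w, P w⟫_𝕜 := by
  calc ⟪P w, w⟫_𝕜 = ⟪P w, adjoint P (P w)⟫_𝕜 := by rw [h]
    _ = ⟪P (P w), P w⟫_𝕜 := adjoint_inner_right _ _ _
    _ = ⟪P w, P w⟫_𝕜 := by rw [← Module.End.mul_apply, hP.eq]

theorem apply_eq_self_of_adjoint_apply_apply_eq (hP : IsIdempotentElem P)
    (h : adjoint P (P w) = w) : P w = w := by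
  have hsq : ‖P w - w‖ ^ 2 = 0 := by
    rw [@norm_sub_sq 𝕜, inner_apply_self_eq_of_adjoint_apply_apply_eq hP h,
      inner_self_eq_norm_sq, norm_apply_eq_of_adjoint_apply_apply_eq h]
    ring
  simpa [sub_eq_zero] using hsq

end LinearMap

/-- A vector `w` satisfies `P†P w = w` if and only if `P w = w` and `P† w = w`. -/
theorem statement7 {V : Type*} [NormedAddCommGroup V] [InnerProductSpace ℝ V]
    [FiniteDimensional ℝ V] (P : V →ₗ[ℝ] V) (hP : P ∘ₗ P = P) (w : V) :
    (LinearMap.adjoint P ∘ₗ P) w = w ↔ (P w = w ∧ LinearMap.adjoint P w = w) := by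
  constructor
  · intro h
    have hPw : P w = w := LinearMap.apply_eq_self_of_adjoint_apply_apply_eq hP h
    exact ⟨hPw, by rwa [LinearMap.comp_apply, hPw] at h⟩
  · rintro ⟨hPw, hP'w⟩
    rw [LinearMap.comp_apply, hPw, hP'w]
end

section
/- If w ∈ V is an eigenvector of P†P corresponding to an eigenvalue λ > 1, then the vector w'' = Q†P w is nonzero and is an eigenvector of Q†Q corresponding to the same eigenvalue λ. -/
/-- If `w` is an eigenvector of `P†P` with eigenvalue `λ > 1`, then `w'' = Q†Pw` is nonzero
and is an eigenvector of `Q†Q` with the same eigenvalue `λ`, where `Q = id − P`. -/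
theorem statement8 {V : Type*} [NormedAddCommGroup V] [InnerProductSpace ℝ V]
    [FiniteDimensional ℝ V] (P Q : V →ₗ[ℝ] V) (hP : P ∘ₗ P = P)
    (hQ : Q = LinearMap.id - P)
    (l : ℝ) (hl : 1 < l) (w : V) (hw : w ≠ 0)
    (heig : (LinearMap.adjoint P ∘ₗ P) w = l • w) :
    LinearMap.adjoint Q (P w) ≠ 0 ∧
    (LinearMap.adjoint Q ∘ₗ Q) (LinearMap.adjoint Q (P w)) =
      l • LinearMap.adjoint Q (P w) := by
  have hl0 : l ≠ 0 := by linarith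
  have heig' : LinearMap.adjoint P (P w) = l • w := heig
  have hPP : ∀ x, P (P x) = P x := fun x => LinearMap.ext_iff.mp hP x
  have hAA : ∀ x, LinearMap.adjoint P (LinearMap.adjoint P x) = LinearMap.adjoint P x := by
    intro x
    have h := congrArg LinearMap.adjoint hP
    rw [LinearMap.adjoint_comp] at h
    exact LinearMap.ext_iff.mp h x
  have hAw : LinearMap.adjoint P w = w := by
    have h1 : l • LinearMap.adjoint P w = l • w := by
      calc l • LinearMap.adjoint P w = LinearMap.adjoint P (l • w) := (map_smul _ _ _).symm
        _ = LinearMap.adjoint P (LinearMap.adjoint P (P w)) := by rw [heig']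
        _ = LinearMap.adjoint P (P w) := hAA _
        _ = l • w := heig'
    exact smul_right_injective V hl0 h1
  have hQadj : ∀ x, LinearMap.adjoint Q x = x - LinearMap.adjoint P x := by
    intro x
    have hid : LinearMap.adjoint (LinearMap.id : V →ₗ[ℝ] V) = LinearMap.id := by
      symm; rw [LinearMap.eq_adjoint_iff]; simp
    rw [hQ, map_sub, hid]
    simp
  have hkey : LinearMap.adjoint Q (P w) = P w - l • w := by
    rw [hQadj, heig']
  constructor
  · rw [hkey]
    intro h0
    have hPwl : P w = l • w := by
      have := sub_eq_zero.mp h0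
      exact this
    have h2 : l • w = (l * l) • w := by
      calc l • w = P w := hPwl.symm
        _ = P (P w) := (hPP w).symm
        _ = P (l • w) := by rw [hPwl]
        _ = l • P w := map_smul _ _ _
        _ = l • (l • w) := by rw [hPwl]
        _ = (l * l) • w := (mul_smul l l w).symm
    have h3 : (l - l * l) • w = 0 := by
      rw [sub_smul, h2]; abel
    have h4 : l - l * l = 0 := by
      by_contra h5
      exact hw (by simpa [h5] using smul_eq_zero.mp h3)
    nlinarith
  · rw [hkey]
    have hQapp : ∀ x, Q x = x - P x := by intro x; rw [hQ]; simp
    rw [LinearMap.comp_apply, hQapp, hQadj]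
    simp only [map_sub, map_smul, heig', hAw, hPP]
    module
end

section
/- Every eigenvalue λ > 1 of P†P is an eigenvalue of Q†Q with the same multiplicity: for every real λ > 1, the dimension of the λ-eigenspace ker(P†P − λ·id) equals the dimension of ker(Q†Q − λ·id). -/
/-!
If `P†P x = λ x` with `λ ≠ 0`, applying the idempotent `P†` gives `P† x = x`, and then
`y = λ x - P x` satisfies `Q†Q y = λ y`. The map `x ↦ λ x - P x` is injective on the
`λ`-eigenspace because an idempotent has no eigenvalue outside `{0, 1}`. This gives
`dim ker (P†P - λ) ≤ dim ker (Q†Q - λ)`, and exchanging the roles of `P` and `Q` gives the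
reverse inequality.
-/

open Module

namespace LinearMap

section Field

variable {K M : Type*} [Field K] [AddCommGroup M] [Module K M]
  {P R : M →ₗ[K] M} {l : K}

lemma apply_eq_self_of_comp_apply_eq_smul (hR : R ∘ₗ R = R) (hl : l ≠ 0) {x : M}
    (hx : R (P x) = l • x) : R x = x := by
  have hRR : R (R (P x)) = R (P x) := congr($hR (P x))
  apply smul_right_injective M hl
  calc l • R x = R (R (P x)) := by rw [← map_smul, hx]
    _ = l • x := by rw [hRR, hx]

lemma eq_zero_of_idempotent_apply_eq_smul (hP : P ∘ₗ P = P) (hl0 : l ≠ 0) (hl1 : l ≠ 1)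
    {x : M} (hx : P x = l • x) : x = 0 := by
  have hPP : P (P x) = P x := congr($hP x)
  rw [hx, map_smul, hx] at hPP
  have : (l * (l - 1)) • x = 0 := by linear_combination (norm := module) hPP
  exact (smul_eq_zero.mp this).resolve_left (mul_ne_zero hl0 (sub_ne_zero.mpr hl1))

lemma smul_sub_apply_mem_ker_compl_comp_compl (hP : P ∘ₗ P = P) (hR : R ∘ₗ R = R)
    (hl : l ≠ 0) {x : M} (hx : x ∈ ker (R ∘ₗ P - l • id)) :
    l • x - P x ∈ ker ((id - R) ∘ₗ (id - P) - l • id) := by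
  have hRPx : R (P x) = l • x := by simpa [sub_eq_zero] using hx
  have hPP : P (P x) = P x := congr($hP x)
  have hRx : R x = x := apply_eq_self_of_comp_apply_eq_smul hR hl hRPx
  simp only [mem_ker, sub_apply, comp_apply, smul_apply, id_apply, map_sub, map_smul, hPP, hRx,
    hRPx]
  module

lemma finrank_ker_comp_sub_smul_le [FiniteDimensional K M] (hP : P ∘ₗ P = P) (hR : R ∘ₗ R = R)
    (hl0 : l ≠ 0) (hl1 : l ≠ 1) :
    finrank K (ker (R ∘ₗ P - l • id)) ≤ finrank K (ker ((id - R) ∘ₗ (id - P) - l • id)) := by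
  let f := (l • id - P).restrict fun x hx => smul_sub_apply_mem_ker_compl_comp_compl hP hR hl0 hx
  refine finrank_le_finrank_of_injective (f := f) ?_
  rw [← ker_eq_bot, ker_eq_bot']
  intro x hfx
  have hPx : P x = l • (x : M) := (sub_eq_zero.mp congr(Subtype.val $hfx)).symm
  exact Subtype.ext (eq_zero_of_idempotent_apply_eq_smul hP hl0 hl1 hPx)

end Field

section InnerProductSpace

variable {𝕜 E : Type*} [RCLike 𝕜] [NormedAddCommGroup E] [InnerProductSpace 𝕜 E]
  [FiniteDimensional 𝕜 E]

lemma adjoint_id_sub (T : E →ₗ[𝕜] E) : adjoint (id - T) = id - adjoint T := by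
  rw [map_sub, adjoint_id]

lemma adjoint_comp_adjoint_of_comp_self {T : E →ₗ[𝕜] E} (hT : T ∘ₗ T = T) :
    adjoint T ∘ₗ adjoint T = adjoint T := by
  rw [← adjoint_comp, hT]

end InnerProductSpace

end LinearMap

/-- Every eigenvalue `λ > 1` of `P†P` is an eigenvalue of `Q†Q` with the same multiplicity,
where `Q = id − P` is the complementary projection. -/
theorem statement9 {V : Type*} [NormedAddCommGroup V] [InnerProductSpace ℝ V]
    [FiniteDimensional ℝ V] (P Q : V →ₗ[ℝ] V) (hP : P ∘ₗ P = P)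
    (hQ : Q = LinearMap.id - P) (l : ℝ) (hl : 1 < l) :
    Module.finrank ℝ (LinearMap.ker (LinearMap.adjoint P ∘ₗ P - l • LinearMap.id)) =
    Module.finrank ℝ (LinearMap.ker (LinearMap.adjoint Q ∘ₗ Q - l • LinearMap.id)) := by
  have hQQ : Q ∘ₗ Q = Q := by
    rw [hQ, LinearMap.sub_comp, LinearMap.id_comp, LinearMap.comp_sub, LinearMap.comp_id, hP,
      sub_self, sub_zero]
  have hPQ : LinearMap.id - Q = P := by rw [hQ, sub_sub_cancel]
  have hl0 : l ≠ 0 := by positivity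
  have hl1 : l ≠ 1 := hl.ne'
  have hle := LinearMap.finrank_ker_comp_sub_smul_le hP
    (LinearMap.adjoint_comp_adjoint_of_comp_self hP) hl0 hl1
  have hge := LinearMap.finrank_ker_comp_sub_smul_le hQQ
    (LinearMap.adjoint_comp_adjoint_of_comp_self hQQ) hl0 hl1
  rw [← LinearMap.adjoint_id_sub, ← hQ] at hle
  rw [← LinearMap.adjoint_id_sub, hPQ] at hge
  exact hle.antisymm hge
end

section
/- Let n = dim V, let r₁ = dim ker(P†P − id) be the multiplicity of eigenvalue 1 and r₀ = dim ker(P†P) the multiplicity of eigenvalue 0 of P†P. Then dim ker(Q†Q) = n − r₀ and dim ker(Q†Q − id) = 2r₀ + r₁ − n; i.e., the spectrum of Q†Q contains eigenvalue 0 with multiplicity n − r₀ and eigenvalue 1 with multiplicity 2r₀ + r₁ − n. -/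
/-!
With `K = ker P` and `R = range P`, one has `ker (P†P) = K` and, because `P` is idempotent,
`ker (P†P − id) = R ⊓ Kᗮ`: if `P†P x = x` then `‖x − P x‖² = 0`. Since `Q = id − P` is again
idempotent with `ker Q = R` and `range Q = K`, the same two facts give `ker (Q†Q) = R` and
`ker (Q†Q − id) = K ⊓ Rᗮ`. Everything then follows from rank–nullity and from
`dim (K ⊓ Rᗮ) + dim R = dim K + dim (R ⊓ Kᗮ)`, which is the dimension formula for `Kᗮ ⊔ R`
read through `(Kᗮ ⊔ R)ᗮ = K ⊓ Rᗮ`.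
-/

open LinearMap Module

section

variable {𝕜 V : Type*} [RCLike 𝕜] [NormedAddCommGroup V] [InnerProductSpace 𝕜 V]
  [FiniteDimensional 𝕜 V]

theorem Submodule.finrank_inf_orthogonal_add_finrank (K R : Submodule 𝕜 V) :
    finrank 𝕜 ↥(K ⊓ Rᗮ) + finrank 𝕜 R = finrank 𝕜 K + finrank 𝕜 ↥(R ⊓ Kᗮ) := by
  have horth : (Kᗮ ⊔ R)ᗮ = K ⊓ Rᗮ := by
    rw [← Submodule.inf_orthogonal, K.orthogonal_orthogonal]
  have hsup := (Kᗮ ⊔ R).finrank_add_finrank_orthogonal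
  have hinf := Kᗮ.finrank_sup_add_finrank_inf_eq R
  have hK := K.finrank_add_finrank_orthogonal
  rw [horth] at hsup
  rw [inf_comm] at hinf
  omega

theorem IsIdempotentElem.eq_of_adjoint_comp_self_apply_eq {P : V →ₗ[𝕜] V}
    (hP : IsIdempotentElem P) {x : V} (hx : P.adjoint (P x) = x) : P x = x := by
  have hPP : P (P x) = P x := LinearMap.congr_fun hP x
  have h₁ : inner 𝕜 x x = inner 𝕜 (P x) (P x) :=
    calc inner 𝕜 x x = inner 𝕜 (P.adjoint (P x)) x := by rw [hx]
      _ = inner 𝕜 (P x) (P x) := adjoint_inner_left P x (P x)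
  have h₂ : inner 𝕜 (P x) x = inner 𝕜 (P x) (P x) :=
    calc inner 𝕜 (P x) x = inner 𝕜 (P x) (P.adjoint (P x)) := by rw [hx]
      _ = inner 𝕜 (P x) (P x) := by rw [adjoint_inner_right, hPP]
  have h₃ : inner 𝕜 x (P x) = inner 𝕜 (P x) (P x) :=
    calc inner 𝕜 x (P x) = inner 𝕜 (P.adjoint (P x)) (P x) := by rw [hx]
      _ = inner 𝕜 (P x) (P x) := by rw [adjoint_inner_left, hPP]
  have h : inner 𝕜 (P x - x) (P x - x) = (0 : 𝕜) := by
    rw [inner_sub_left, inner_sub_right, inner_sub_right, h₁, h₂, h₃]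
    ring
  exact sub_eq_zero.mp (inner_self_eq_zero.mp h)

theorem IsIdempotentElem.ker_adjoint_comp_self_sub_id {P : V →ₗ[𝕜] V} (hP : IsIdempotentElem P) :
    ker (P.adjoint ∘ₗ P - LinearMap.id) = range P ⊓ (ker P)ᗮ := by
  have hP' : IsIdempotentElem P.adjoint := by
    simpa only [star_eq_adjoint] using hP.star
  ext x
  rw [mem_ker, LinearMap.sub_apply, comp_apply, id_apply, sub_eq_zero, Submodule.mem_inf,
    orthogonal_ker, hP.mem_range_iff, hP'.mem_range_iff]
  constructor
  · intro hx
    have hPx := hP.eq_of_adjoint_comp_self_apply_eq hx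
    exact ⟨hPx, by rwa [hPx] at hx⟩
  · rintro ⟨hPx, hP'x⟩
    rw [hPx, hP'x]

end

/-- If `r₁`, `r₀` are the multiplicities of the eigenvalues `1` and `0` of `P†P` and
`n = dim V`, then `Q†Q` has eigenvalue `0` with multiplicity `n − r₀` and eigenvalue `1`
with multiplicity `2r₀ + r₁ − n`, where `Q = id − P`. -/
theorem statement10 {V : Type*} [NormedAddCommGroup V] [InnerProductSpace ℝ V]
    [FiniteDimensional ℝ V] (P Q : V →ₗ[ℝ] V) (hP : P ∘ₗ P = P)
    (hQ : Q = LinearMap.id - P)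
    (n r₀ r₁ : ℕ) (hn : n = Module.finrank ℝ V)
    (hr₁ : r₁ = Module.finrank ℝ (LinearMap.ker (LinearMap.adjoint P ∘ₗ P - LinearMap.id)))
    (hr₀ : r₀ = Module.finrank ℝ (LinearMap.ker (LinearMap.adjoint P ∘ₗ P))) :
    (Module.finrank ℝ (LinearMap.ker (LinearMap.adjoint Q ∘ₗ Q)) : ℤ) = n - r₀ ∧
    (Module.finrank ℝ (LinearMap.ker (LinearMap.adjoint Q ∘ₗ Q - LinearMap.id)) : ℤ) =
      2 * r₀ + r₁ - n := by
  subst hQ hn hr₀ hr₁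
  have hP : IsIdempotentElem P := hP
  have hQ : IsIdempotentElem (LinearMap.id - P) := hP.one_sub
  rw [ker_adjoint_comp_self, ker_adjoint_comp_self, hP.ker_adjoint_comp_self_sub_id,
    hQ.ker_adjoint_comp_self_sub_id, ← hP.range_eq_ker, ← hP.ker_eq_range]
  have hdim := (ker P).finrank_inf_orthogonal_add_finrank (range P)
  have hrank := P.finrank_range_add_finrank_ker
  omega
end

section
/- If k denotes the rank of P and n = dim V, then the eigenvalue 1 of P†P has multiplicity at least 2k − n: dim ker(P†P − id) ≥ 2k − n. (In the graph setting: if the cyclomatic number is at least |V|−1, the cycle Kirchhoff–Symanzik matrix has eigenvalue 1 with multiplicity at least |C| − |V| + 1.) -/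
/-!
Both `range P` and `range P†` consist of fixed points (`P†` is again idempotent), so every
vector in their intersection satisfies `P† (P x) = x`. Since `P†` has the same rank `k` as `P`,
these two `k`-dimensional subspaces of `V` meet in dimension at least `2k − n`.
-/

theorem Submodule.finrank_add_finrank_le_finrank_inf_add_finrank {K V : Type*} [DivisionRing K]
    [AddCommGroup V] [Module K V] [FiniteDimensional K V] (s t : Submodule K V) :
    Module.finrank K s + Module.finrank K t ≤
      Module.finrank K (s ⊓ t : Submodule K V) + Module.finrank K V := by
  rw [← Submodule.finrank_sup_add_finrank_inf_eq, add_comm (Module.finrank K _)]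
  exact Nat.add_le_add_left (Submodule.finrank_le _) _

namespace LinearMap

variable {𝕜 E : Type*} [RCLike 𝕜] [NormedAddCommGroup E] [InnerProductSpace 𝕜 E]
  [FiniteDimensional 𝕜 E]

theorem isIdempotentElem_adjoint {P : E →ₗ[𝕜] E} (hP : IsIdempotentElem P) :
    IsIdempotentElem (LinearMap.adjoint P) := by
  simpa only [star_eq_adjoint] using hP.star

theorem range_inf_range_adjoint_le_ker_adjoint_comp_self_sub_id {P : E →ₗ[𝕜] E}
    (hP : IsIdempotentElem P) :
    range P ⊓ range (LinearMap.adjoint P) ≤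
      ker (LinearMap.adjoint P ∘ₗ P - LinearMap.id) := by
  intro x hx
  obtain ⟨hPx, hP'x⟩ := Submodule.mem_inf.mp hx
  rw [IsIdempotentElem.mem_range_iff hP] at hPx
  rw [IsIdempotentElem.mem_range_iff (isIdempotentElem_adjoint hP)] at hP'x
  simp [hPx, hP'x]

end LinearMap

/-- If `k` is the rank of the projection `P` and `n = dim V`, then the eigenvalue `1` of
`P†P` has multiplicity at least `2k − n`. -/
theorem statement11 {V : Type*} [NormedAddCommGroup V] [InnerProductSpace ℝ V]
    [FiniteDimensional ℝ V] (P : V →ₗ[ℝ] V) (hP : P ∘ₗ P = P)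
    (n k : ℕ) (hn : n = Module.finrank ℝ V)
    (hk : k = Module.finrank ℝ (LinearMap.range P)) :
    (Module.finrank ℝ (LinearMap.ker (LinearMap.adjoint P ∘ₗ P - LinearMap.id)) : ℤ) ≥
      2 * k - n := by
  have hinf := Submodule.finrank_mono
    (LinearMap.range_inf_range_adjoint_le_ker_adjoint_comp_self_sub_id hP)
  have hdim := (LinearMap.range P).finrank_add_finrank_le_finrank_inf_add_finrank
    (LinearMap.range (LinearMap.adjoint P))
  rw [LinearMap.finrank_range_adjoint] at hdim
  omega
end

section
/- Let w ∈ ℝⁿ be an eigenvector of PᵀP corresponding to an eigenvalue λ > 1. Then the chord block of w, i.e. the vector (⟨e_α, w⟩)_α ∈ ℝᵏ, is nonzero and is an eigenvector of K with eigenvalue λ, and the cochord block of Pw, i.e. the vector (⟨e_μ, P w⟩)_μ ∈ ℝᵐ, is nonzero and is an eigenvector of *K with the same eigenvalue λ. -/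
open Matrix

/-- The cycle Kirchhoff–Symanzik matrix `K_{α,α'} = ⟨c_α, c_{α'}⟩`. -/
def cycKS (m k : ℕ) (ccy : Fin k → (Fin m ⊕ Fin k) → ℝ) : Matrix (Fin k) (Fin k) ℝ :=
  Matrix.of fun α α' => ccy α ⬝ᵥ ccy α'

/-- The cocycle Kirchhoff–Symanzik matrix `(*K)_{μ,μ'} = ⟨c_μ, c_{μ'}⟩`. -/
def cocKS (m k : ℕ) (cco : Fin m → (Fin m ⊕ Fin k) → ℝ) : Matrix (Fin m) (Fin m) ℝ :=
  Matrix.of fun μ μ' => cco μ ⬝ᵥ cco μ'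

/-- The superposition matrix `ω_{μ,α} = ⟨c_μ, e_α⟩`. -/
def supMat (m k : ℕ) (cco : Fin m → (Fin m ⊕ Fin k) → ℝ) : Matrix (Fin m) (Fin k) ℝ :=
  Matrix.of fun μ α => cco μ ⬝ᵥ eCh m k α

/-!
The orthogonality relations pin down the cycles and cocycles in terms of the superposition
matrix `ω`: `c_α = e_α - Σ_μ ω_{μα} e_μ` and `c_μ = e_μ + Σ_α ω_{μα} e_α`, so that
`K = 1 + ωᵀω` and `*K = 1 + ωωᵀ`. Moreover `PᵀP w = (0, K u)` with `u` the chord block of `w`,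
so an eigenvector of `PᵀP` with `λ ≠ 0` has vanishing cochord block and `K u = λ u`. The
cochord block of `Pw` is `-ω u`, and the intertwining `(1 + ωωᵀ) ω = ω (1 + ωᵀω)` makes it an
eigenvector of `*K`; it is nonzero since `ω u = 0` would give `K u = u`, i.e. `λ = 1`.
-/

section Intertwining

variable {m k R : Type*} [Fintype m] [Fintype k]

theorem one_add_mul_transpose_mul [DecidableEq m] [DecidableEq k] [Semiring R]
    (ω : Matrix m k R) :
    (1 + ω * ωᵀ) * ω = ω * (1 + ωᵀ * ω) := by
  rw [Matrix.add_mul, Matrix.mul_add, Matrix.one_mul, Matrix.mul_one, Matrix.mul_assoc]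

theorem mulVec_eigen_of_transpose_mul_eigen [DecidableEq m] [DecidableEq k] [CommSemiring R]
    {ω : Matrix m k R} {u : k → R} {l : R} (h : (1 + ωᵀ * ω) *ᵥ u = l • u) :
    (1 + ω * ωᵀ) *ᵥ (ω *ᵥ u) = l • (ω *ᵥ u) := by
  rw [mulVec_mulVec, one_add_mul_transpose_mul, ← mulVec_mulVec, h, mulVec_smul]

theorem mulVec_ne_zero_of_transpose_mul_eigen [DecidableEq k] [Field R]
    {ω : Matrix m k R} {u : k → R} {l : R} (h : (1 + ωᵀ * ω) *ᵥ u = l • u) (hl : l ≠ 1)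
    (hu : u ≠ 0) : ω *ᵥ u ≠ 0 := by
  intro hωu
  have hfix : l • u = u := by
    rw [← h, add_mulVec, one_mulVec, ← mulVec_mulVec, hωu, mulVec_zero, add_zero]
  have hsub : (l - 1) • u = 0 := by rw [sub_smul, one_smul, hfix, sub_self]
  exact (smul_eq_zero.mp hsub).elim (fun h => hl (sub_eq_zero.mp h)) hu

end Intertwining

section KirchhoffSymanzik

variable {m k : ℕ} {ccy : Fin k → (Fin m ⊕ Fin k) → ℝ}
  {cco : Fin m → (Fin m ⊕ Fin k) → ℝ}

theorem eCh_dotProduct (α : Fin k) (v : (Fin m ⊕ Fin k) → ℝ) :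
    eCh m k α ⬝ᵥ v = v (Sum.inr α) := by
  simp [eCh]

theorem eCo_dotProduct (μ : Fin m) (v : (Fin m ⊕ Fin k) → ℝ) :
    eCo m k μ ⬝ᵥ v = v (Sum.inl μ) := by
  simp [eCo]

theorem supMat_apply (μ : Fin m) (α : Fin k) : supMat m k cco μ α = cco μ (Sum.inr α) := by
  rw [supMat, of_apply, dotProduct_comm, eCh_dotProduct]

theorem cycProj_mulVec (w : (Fin m ⊕ Fin k) → ℝ) :
    cycProj m k ccy *ᵥ w = ∑ α, w (Sum.inr α) • ccy α := by
  simp [cycProj, sum_mulVec, vecMulVec_mulVec, eCh_dotProduct]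

theorem cycProj_transpose_mulVec (y : (Fin m ⊕ Fin k) → ℝ) :
    (cycProj m k ccy)ᵀ *ᵥ y = ∑ α, (ccy α ⬝ᵥ y) • eCh m k α := by
  simp [cycProj, transpose_sum, transpose_vecMulVec, sum_mulVec, vecMulVec_mulVec]

theorem cycProj_transpose_mul_cycProj_mulVec (w : (Fin m ⊕ Fin k) → ℝ) :
    ((cycProj m k ccy)ᵀ * cycProj m k ccy) *ᵥ w =
      Sum.elim (0 : Fin m → ℝ) (cycKS m k ccy *ᵥ fun α => w (Sum.inr α)) := by
  rw [← mulVec_mulVec, cycProj_mulVec, cycProj_transpose_mulVec]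
  ext (μ | α)
  · simp [eCh]
  · simp only [Finset.sum_apply, Pi.smul_apply, smul_eq_mul, eCh, Pi.single_apply,
      Sum.inr.injEq, mul_ite, mul_one, mul_zero, Finset.sum_ite_eq, Finset.mem_univ, if_true,
      Sum.elim_inr, dotProduct_sum, dotProduct_smul]
    exact Finset.sum_congr rfl fun β _ => mul_comm _ _

theorem cycle_apply_inr
    (hch : ∀ α α' : Fin k, eCh m k α ⬝ᵥ ccy α' = if α = α' then 1 else 0)
    (α α' : Fin k) : ccy α' (Sum.inr α) = if α = α' then 1 else 0 := by
  rw [← hch α α', eCh_dotProduct]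

theorem cocycle_apply_inl
    (hco : ∀ μ μ' : Fin m, eCo m k μ ⬝ᵥ cco μ' = if μ = μ' then 1 else 0)
    (μ μ' : Fin m) : cco μ' (Sum.inl μ) = if μ = μ' then 1 else 0 := by
  rw [← hco μ μ', eCo_dotProduct]

theorem cycle_apply_inl
    (hch : ∀ α α' : Fin k, eCh m k α ⬝ᵥ ccy α' = if α = α' then 1 else 0)
    (hco : ∀ μ μ' : Fin m, eCo m k μ ⬝ᵥ cco μ' = if μ = μ' then 1 else 0)
    (hcc : ∀ (α : Fin k) (μ : Fin m), ccy α ⬝ᵥ cco μ = 0) (α : Fin k) (μ : Fin m) :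
    ccy α (Sum.inl μ) = -supMat m k cco μ α := by
  have h := hcc α μ
  simp only [dotProduct, Fintype.sum_sum_type, cocycle_apply_inl hco, cycle_apply_inr hch,
    mul_ite, mul_one, mul_zero, ite_mul, one_mul, zero_mul, Finset.sum_ite_eq',
    Finset.mem_univ, if_true] at h
  rw [supMat_apply]
  linarith

theorem cycKS_eq_one_add_transpose_mul
    (hch : ∀ α α' : Fin k, eCh m k α ⬝ᵥ ccy α' = if α = α' then 1 else 0)
    (hco : ∀ μ μ' : Fin m, eCo m k μ ⬝ᵥ cco μ' = if μ = μ' then 1 else 0)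
    (hcc : ∀ (α : Fin k) (μ : Fin m), ccy α ⬝ᵥ cco μ = 0) :
    cycKS m k ccy = 1 + (supMat m k cco)ᵀ * supMat m k cco := by
  ext α α'
  simp [cycKS, dotProduct, Fintype.sum_sum_type, cycle_apply_inl hch hco hcc,
    cycle_apply_inr hch, Matrix.mul_apply, Matrix.one_apply, add_comm, eq_comm]

theorem cocKS_eq_one_add_mul_transpose
    (hco : ∀ μ μ' : Fin m, eCo m k μ ⬝ᵥ cco μ' = if μ = μ' then 1 else 0) :
    cocKS m k cco = 1 + supMat m k cco * (supMat m k cco)ᵀ := by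
  ext μ μ'
  simp [cocKS, dotProduct, Fintype.sum_sum_type, cocycle_apply_inl hco, supMat_apply,
    Matrix.mul_apply, Matrix.one_apply, eq_comm]

theorem cycProj_mulVec_inl
    (hch : ∀ α α' : Fin k, eCh m k α ⬝ᵥ ccy α' = if α = α' then 1 else 0)
    (hco : ∀ μ μ' : Fin m, eCo m k μ ⬝ᵥ cco μ' = if μ = μ' then 1 else 0)
    (hcc : ∀ (α : Fin k) (μ : Fin m), ccy α ⬝ᵥ cco μ = 0)
    (w : (Fin m ⊕ Fin k) → ℝ) :
    (fun μ => (cycProj m k ccy *ᵥ w) (Sum.inl μ)) =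
      -(supMat m k cco *ᵥ fun α => w (Sum.inr α)) := by
  ext μ
  rw [cycProj_mulVec]
  simp [cycle_apply_inl hch hco hcc, mulVec, dotProduct, mul_comm]

end KirchhoffSymanzik

/-- If `w` is an eigenvector of `PᵀP` with eigenvalue `λ > 1`, then the chord block of `w`
is a nonzero eigenvector of `K` with eigenvalue `λ`, and the cochord block of `Pw` is a
nonzero eigenvector of `*K` with the same eigenvalue `λ`. -/
theorem statement13 (m k : ℕ)
    (ccy : Fin k → (Fin m ⊕ Fin k) → ℝ) (cco : Fin m → (Fin m ⊕ Fin k) → ℝ)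
    (hch : ∀ α α' : Fin k, eCh m k α ⬝ᵥ ccy α' = if α = α' then 1 else 0)
    (hco : ∀ μ μ' : Fin m, eCo m k μ ⬝ᵥ cco μ' = if μ = μ' then 1 else 0)
    (hcc : ∀ (α : Fin k) (μ : Fin m), ccy α ⬝ᵥ cco μ = 0)
    (l : ℝ) (hl : 1 < l) (w : (Fin m ⊕ Fin k) → ℝ) (hw : w ≠ 0)
    (heig : ((cycProj m k ccy)ᵀ * cycProj m k ccy) *ᵥ w = l • w) :
    ((fun α => w (Sum.inr α)) ≠ 0 ∧
      cycKS m k ccy *ᵥ (fun α => w (Sum.inr α)) = l • fun α => w (Sum.inr α)) ∧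
    ((fun μ => (cycProj m k ccy *ᵥ w) (Sum.inl μ)) ≠ 0 ∧
      cocKS m k cco *ᵥ (fun μ => (cycProj m k ccy *ᵥ w) (Sum.inl μ)) =
        l • fun μ => (cycProj m k ccy *ᵥ w) (Sum.inl μ)) := by
  set u : Fin k → ℝ := fun α => w (Sum.inr α)
  rw [cycProj_transpose_mul_cycProj_mulVec] at heig
  have hcochord (μ : Fin m) : w (Sum.inl μ) = 0 := by
    have h := congrFun heig (Sum.inl μ)
    simp only [Sum.elim_inl, Pi.zero_apply, Pi.smul_apply, smul_eq_mul] at h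
    exact (mul_eq_zero.mp h.symm).resolve_left (by positivity)
  have hK : cycKS m k ccy *ᵥ u = l • u := funext fun α => congrFun heig (Sum.inr α)
  have hu : u ≠ 0 := fun h => hw (funext (Sum.rec hcochord (congrFun h)))
  rw [cycKS_eq_one_add_transpose_mul hch hco hcc] at hK
  rw [cycProj_mulVec_inl hch hco hcc, cocKS_eq_one_add_mul_transpose hco, mulVec_neg,
    mulVec_eigen_of_transpose_mul_eigen hK, smul_neg, cycKS_eq_one_add_transpose_mul hch hco hcc]
  exact ⟨⟨hu, hK⟩,
    neg_ne_zero.mpr (mulVec_ne_zero_of_transpose_mul_eigen hK hl.ne' hu), rfl⟩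
end

section
/- Let w ∈ ℝⁿ be a nonzero vector with PᵀP w = w (an eigenvector of PᵀP corresponding to eigenvalue 1). Then P w = w and Pᵀ w = w, and the chord block of w, i.e. the vector (⟨e_α, w⟩)_α ∈ ℝᵏ, is a nonzero eigenvector of K corresponding to eigenvalue 1. -/
open Matrix

section myHelpers
variable {n : Type*} [Fintype n]

lemma myVecMulVec_mulVec (u v w : n → ℝ) : vecMulVec u v *ᵥ w = (v ⬝ᵥ w) • u := by
  ext i
  simp [vecMulVec_apply, mulVec, dotProduct, Finset.mul_sum, mul_comm, mul_assoc, mul_left_comm]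

lemma myVecMulVec_transpose (u v : n → ℝ) : (vecMulVec u v)ᵀ = vecMulVec v u := by
  ext i j; simp [vecMulVec_apply, mul_comm]

lemma myVecMulVec_mul (u v u' v' : n → ℝ) :
    vecMulVec u v * vecMulVec u' v' = (v ⬝ᵥ u') • vecMulVec u v' := by
  ext i j
  simp [vecMulVec_apply, Matrix.mul_apply, dotProduct, Finset.sum_mul, Finset.mul_sum]
  exact Finset.sum_congr rfl fun x _ => by ring

lemma mySum_mulVec {ι : Type*} (s : Finset ι) (A : ι → Matrix n n ℝ) (v : n → ℝ) :
    (∑ i ∈ s, A i) *ᵥ v = ∑ i ∈ s, A i *ᵥ v := by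
  ext j
  simp only [mulVec, dotProduct, Finset.sum_apply, Matrix.sum_apply, Finset.sum_mul]
  rw [Finset.sum_comm]

lemma myDotProduct_sum {ι : Type*} (s : Finset ι) (v : n → ℝ) (f : ι → n → ℝ) :
    v ⬝ᵥ (∑ i ∈ s, f i) = ∑ i ∈ s, v ⬝ᵥ f i := by
  simp only [dotProduct, Finset.sum_apply, Finset.mul_sum]
  rw [Finset.sum_comm]

end myHelpers

/-- If `w ≠ 0` satisfies `PᵀP w = w`, then `P w = w`, `Pᵀ w = w`, and the chord block of `w`
is a nonzero eigenvector of `K` with eigenvalue `1`. -/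
theorem statement14 (m k : ℕ)
    (ccy : Fin k → (Fin m ⊕ Fin k) → ℝ) (cco : Fin m → (Fin m ⊕ Fin k) → ℝ)
    (hch : ∀ α α' : Fin k, eCh m k α ⬝ᵥ ccy α' = if α = α' then 1 else 0)
    (hco : ∀ μ μ' : Fin m, eCo m k μ ⬝ᵥ cco μ' = if μ = μ' then 1 else 0)
    (hcc : ∀ (α : Fin k) (μ : Fin m), ccy α ⬝ᵥ cco μ = 0)
    (w : (Fin m ⊕ Fin k) → ℝ) (hw : w ≠ 0)
    (heig : ((cycProj m k ccy)ᵀ * cycProj m k ccy) *ᵥ w = w) :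
    cycProj m k ccy *ᵥ w = w ∧
    (cycProj m k ccy)ᵀ *ᵥ w = w ∧
    (fun α => w (Sum.inr α)) ≠ 0 ∧
    cycKS m k ccy *ᵥ (fun α => w (Sum.inr α)) = (1 : ℝ) • fun α => w (Sum.inr α) := by
  set P := cycProj m k ccy with hPdef
  -- P is idempotent
  have hPP : P * P = P := by
    rw [hPdef]
    unfold cycProj
    rw [Finset.sum_mul]
    refine Finset.sum_congr rfl fun α _ => ?_
    rw [Finset.mul_sum]
    have h : ∀ β, vecMulVec (ccy α) (eCh m k α) * vecMulVec (ccy β) (eCh m k β)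
        = (if α = β then (1:ℝ) else 0) • vecMulVec (ccy α) (eCh m k β) := by
      intro β; rw [myVecMulVec_mul, hch α β]
    simp only [h, ite_smul, one_smul, zero_smul]
    simp
  have hTT : Pᵀ * Pᵀ = Pᵀ := by rw [← transpose_mul, hPP]
  -- Pᵀ w = w
  have hPt : Pᵀ *ᵥ w = w := by
    conv_lhs => rw [← heig]
    rw [← mulVec_mulVec, mulVec_mulVec, hTT, mulVec_mulVec, heig]
  -- P w = w
  have key : ∀ u, (P *ᵥ w) ⬝ᵥ u = w ⬝ᵥ (Pᵀ *ᵥ u) := by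
    intro u; rw [dotProduct_mulVec, vecMul_transpose]
  have h1 : (P *ᵥ w) ⬝ᵥ (P *ᵥ w) = w ⬝ᵥ w := by
    rw [key, mulVec_mulVec, heig]
  have h2 : (P *ᵥ w) ⬝ᵥ w = w ⬝ᵥ w := by rw [key, hPt]
  have h3 : w ⬝ᵥ (P *ᵥ w) = w ⬝ᵥ w := by rw [dotProduct_comm, h2]
  have hsub : (P *ᵥ w - w) ⬝ᵥ (P *ᵥ w - w) = 0 := by
    rw [sub_dotProduct, dotProduct_sub, dotProduct_sub, h1, h2, h3]
    ring
  have hP : P *ᵥ w = w := by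
    have := (dotProduct_self_eq_zero).mp hsub
    exact sub_eq_zero.mp this
  -- chord block facts
  have hEch : ∀ α, eCh m k α ⬝ᵥ w = w (Sum.inr α) := by
    intro α
    simp [eCh, dotProduct, Pi.single_apply]
  have hPw : P *ᵥ w = ∑ α, w (Sum.inr α) • ccy α := by
    rw [hPdef]
    unfold cycProj
    rw [mySum_mulVec]
    exact Finset.sum_congr rfl fun α _ => by rw [myVecMulVec_mulVec, hEch]
  have hx : (fun α => w (Sum.inr α)) ≠ 0 := by
    intro h
    apply hw
    have hz : ∀ α, w (Sum.inr α) = 0 := fun α => congrFun h α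
    rw [← hP, hPw]
    simp [hz]
  have hPtw : ∀ α, w (Sum.inr α) = ccy α ⬝ᵥ w := by
    intro α
    conv_lhs => rw [← hPt]
    rw [hPdef]
    unfold cycProj
    rw [transpose_sum]
    simp only [myVecMulVec_transpose]
    rw [mySum_mulVec]
    simp only [myVecMulVec_mulVec]
    simp [Finset.sum_apply, eCh, Pi.single_apply]
  refine ⟨hP, hPt, hx, ?_⟩
  rw [one_smul]
  funext α
  show (cycKS m k ccy *ᵥ fun α => w (Sum.inr α)) α = w (Sum.inr α)
  rw [hPtw α]
  conv_rhs => rw [← hP, hPw]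
  rw [myDotProduct_sum]
  simp only [mulVec, cycKS, of_apply, dotProduct_smul, smul_eq_mul]
  refine Finset.sum_congr rfl fun α' _ => ?_
  simp [dotProduct, mul_comm]
end

section
/- The Kirchhoff–Symanzik matrices are expressed in terms of the superposition matrix by *K = 1_m + ω ωᵀ and K = 1_k + ωᵀ ω, where 1_m and 1_k denote identity matrices of the indicated sizes. -/
open Matrix

/-- The Kirchhoff–Symanzik matrices in terms of the superposition matrix:
`*K = 1 + ω ωᵀ` and `K = 1 + ωᵀ ω`. -/
theorem statement15 (m k : ℕ)
    (ccy : Fin k → (Fin m ⊕ Fin k) → ℝ) (cco : Fin m → (Fin m ⊕ Fin k) → ℝ)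
    (hch : ∀ α α' : Fin k, eCh m k α ⬝ᵥ ccy α' = if α = α' then 1 else 0)
    (hco : ∀ μ μ' : Fin m, eCo m k μ ⬝ᵥ cco μ' = if μ = μ' then 1 else 0)
    (hcc : ∀ (α : Fin k) (μ : Fin m), ccy α ⬝ᵥ cco μ = 0)
    :
    cocKS m k cco = 1 + supMat m k cco * (supMat m k cco)ᵀ ∧
    cycKS m k ccy = 1 + (supMat m k cco)ᵀ * supMat m k cco := by
  have hcoL : ∀ μ μ' : Fin m, cco μ' (Sum.inl μ) = if μ = μ' then 1 else 0 := by
    intro μ μ'; rw [← eCo_dot m k μ (cco μ'), hco]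
  have hchR : ∀ α α' : Fin k, ccy α' (Sum.inr α) = if α = α' then 1 else 0 := by
    intro α α'; rw [← eCh_dot m k α (ccy α'), hch]
  have hsup : ∀ (μ : Fin m) (α : Fin k), supMat m k cco μ α = cco μ (Sum.inr α) := by
    intro μ α
    simp [supMat, eCh, dotProduct, Pi.single_apply]
  have hcyL : ∀ (α : Fin k) (μ : Fin m), ccy α (Sum.inl μ) = - supMat m k cco μ α := by
    intro α μ
    have h := hcc α μ
    rw [dotProduct, Fintype.sum_sum_type] at h
    simp only [hcoL, hchR, mul_ite, mul_one, mul_zero, ite_mul, one_mul, zero_mul,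
      Finset.sum_ite_eq', Finset.mem_univ, if_true] at h
    rw [hsup]
    linarith
  constructor
  · ext μ μ'
    simp only [cocKS, Matrix.of_apply, Matrix.add_apply, Matrix.mul_apply,
      Matrix.one_apply, Matrix.transpose_apply, dotProduct, Fintype.sum_sum_type]
    have h1 : (∑ μ'' : Fin m, cco μ (Sum.inl μ'') * cco μ' (Sum.inl μ''))
        = if μ = μ' then 1 else 0 := by
      simp only [hcoL, ite_mul, one_mul, zero_mul, Finset.sum_ite_eq, Finset.mem_univ,
        if_true]
      by_cases h : μ = μ' <;> simp [h, eq_comm]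
    rw [h1]
    congr 1
    exact Finset.sum_congr rfl fun α _ => by rw [hsup, hsup]
  · ext α α'
    simp only [cycKS, Matrix.of_apply, Matrix.add_apply, Matrix.mul_apply,
      Matrix.one_apply, Matrix.transpose_apply, dotProduct, Fintype.sum_sum_type]
    have h2 : (∑ α'' : Fin k, ccy α (Sum.inr α'') * ccy α' (Sum.inr α''))
        = if α = α' then 1 else 0 := by
      simp only [hchR, ite_mul, one_mul, zero_mul, Finset.sum_ite_eq, Finset.mem_univ,
        if_true]
      by_cases h : α = α' <;> simp [h, eq_comm]
    rw [h2, add_comm]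
    congr 1
    exact Finset.sum_congr rfl fun μ _ => by rw [hcyL, hcyL]; ring
end

section
/- The matrices K and *K are invertible, and their inverses are related by the identities (*K)⁻¹ = 1_m − ω K⁻¹ ωᵀ and K⁻¹ = 1_k − ωᵀ (*K)⁻¹ ω, where 1_m and 1_k denote identity matrices of the indicated sizes. -/
open Matrix

/-- `K` and `*K` are invertible, and `(*K)⁻¹ = 1 − ω K⁻¹ ωᵀ`, `K⁻¹ = 1 − ωᵀ (*K)⁻¹ ω`. -/
theorem statement16 (m k : ℕ)
    (ccy : Fin k → (Fin m ⊕ Fin k) → ℝ) (cco : Fin m → (Fin m ⊕ Fin k) → ℝ)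
    (hch : ∀ α α' : Fin k, eCh m k α ⬝ᵥ ccy α' = if α = α' then 1 else 0)
    (hco : ∀ μ μ' : Fin m, eCo m k μ ⬝ᵥ cco μ' = if μ = μ' then 1 else 0)
    (hcc : ∀ (α : Fin k) (μ : Fin m), ccy α ⬝ᵥ cco μ = 0)
    :
    IsUnit (cycKS m k ccy).det ∧ IsUnit (cocKS m k cco).det ∧
    (cocKS m k cco)⁻¹ = 1 - supMat m k cco * (cycKS m k ccy)⁻¹ * (supMat m k cco)ᵀ ∧
    (cycKS m k ccy)⁻¹ = 1 - (supMat m k cco)ᵀ * (cocKS m k cco)⁻¹ * supMat m k cco := by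
  set W := supMat m k cco with hW
  -- entrywise facts
  have hchE : ∀ (α α' : Fin k), ccy α' (Sum.inr α) = if α = α' then 1 else 0 := by
    intro α α'
    have := hch α α'
    rwa [eCh, single_dotProduct, one_mul] at this
  have hcoE : ∀ (μ μ' : Fin m), cco μ' (Sum.inl μ) = if μ = μ' then 1 else 0 := by
    intro μ μ'
    have := hco μ μ'
    rwa [eCo, single_dotProduct, one_mul] at this
  have hWE : ∀ (μ : Fin m) (α : Fin k), W μ α = cco μ (Sum.inr α) := by
    intro μ α
    simp [hW, supMat, eCh, dotProduct_single, mul_one]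
  have hccyE : ∀ (α : Fin k) (μ : Fin m), ccy α (Sum.inl μ) = - W μ α := by
    intro α μ
    have := hcc α μ
    rw [dotProduct, Fintype.sum_sum_type] at this
    have h1 : ∑ μ' : Fin m, ccy α (Sum.inl μ') * cco μ (Sum.inl μ') = ccy α (Sum.inl μ) := by
      rw [Finset.sum_eq_single μ]
      · rw [hcoE μ μ, if_pos rfl, mul_one]
      · intro b _ hb
        rw [hcoE b μ, if_neg hb, mul_zero]
      · simp
    have h2 : ∑ β : Fin k, ccy α (Sum.inr β) * cco μ (Sum.inr β) = W μ α := by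
      rw [Finset.sum_eq_single α]
      · rw [hchE α α, if_pos rfl, one_mul, hWE]
      · intro b _ hb
        rw [hchE b α, if_neg hb, zero_mul]
      · simp
    rw [h1, h2] at this
    linarith
  -- structural identities
  have hK : cycKS m k ccy = 1 + Wᵀ * W := by
    ext α α'
    simp only [cycKS, Matrix.of_apply, dotProduct, Fintype.sum_sum_type,
      Matrix.add_apply, Matrix.mul_apply, Matrix.transpose_apply, Matrix.one_apply]
    have h1 : ∑ μ : Fin m, ccy α (Sum.inl μ) * ccy α' (Sum.inl μ)
        = ∑ μ : Fin m, W μ α * W μ α' := by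
      refine Finset.sum_congr rfl fun μ _ => ?_
      rw [hccyE, hccyE]; ring
    have h2 : ∑ β : Fin k, ccy α (Sum.inr β) * ccy α' (Sum.inr β)
        = if α = α' then 1 else 0 := by
      rw [Finset.sum_eq_single α]
      · rw [hchE α α, if_pos rfl, one_mul, hchE]
      · intro b _ hb
        rw [hchE b α, if_neg hb, zero_mul]
      · simp
    rw [h1, h2]
    ring
  have hK' : cocKS m k cco = 1 + W * Wᵀ := by
    ext μ μ'
    simp only [cocKS, Matrix.of_apply, dotProduct, Fintype.sum_sum_type,
      Matrix.add_apply, Matrix.mul_apply, Matrix.transpose_apply, Matrix.one_apply]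
    have h1 : ∑ ν : Fin m, cco μ (Sum.inl ν) * cco μ' (Sum.inl ν)
        = if μ = μ' then 1 else 0 := by
      rw [Finset.sum_eq_single μ]
      · rw [hcoE μ μ, if_pos rfl, one_mul, hcoE]
      · intro b _ hb
        rw [hcoE b μ, if_neg hb, zero_mul]
      · simp
    have h2 : ∑ β : Fin k, cco μ (Sum.inr β) * cco μ' (Sum.inr β)
        = ∑ β : Fin k, W μ β * W μ' β := by
      refine Finset.sum_congr rfl fun β _ => ?_
      rw [hWE, hWE]
    rw [h1, h2]
  -- positive definiteness and invertibility
  have hpdK : (cycKS m k ccy).PosDef := by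
    rw [hK]
    refine Matrix.PosDef.add_posSemidef Matrix.PosDef.one ?_
    simpa [Matrix.conjTranspose_eq_transpose_of_trivial] using
      Matrix.posSemidef_conjTranspose_mul_self W
  have hpdK' : (cocKS m k cco).PosDef := by
    rw [hK']
    refine Matrix.PosDef.add_posSemidef Matrix.PosDef.one ?_
    simpa [Matrix.conjTranspose_eq_transpose_of_trivial] using
      Matrix.posSemidef_self_mul_conjTranspose W
  have hdK : IsUnit (cycKS m k ccy).det := hpdK.det_pos.ne'.isUnit
  have hdK' : IsUnit (cocKS m k cco).det := hpdK'.det_pos.ne'.isUnit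
  refine ⟨hdK, hdK', ?_, ?_⟩
  · -- (*K)⁻¹ = 1 - W K⁻¹ Wᵀ
    set X := (cycKS m k ccy)⁻¹ with hX
    have hKX : Wᵀ * W * X = 1 - X := by
      have h := Matrix.mul_nonsing_inv _ hdK
      rw [← hX, hK, add_mul, one_mul] at h
      rw [eq_sub_iff_add_eq']
      exact h
    refine Matrix.inv_eq_right_inv ?_
    rw [hK']
    have h2 : W * Wᵀ * (W * X * Wᵀ) = W * Wᵀ - W * X * Wᵀ := by
      calc W * Wᵀ * (W * X * Wᵀ) = W * (Wᵀ * W * X) * Wᵀ := by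
            simp only [Matrix.mul_assoc]
        _ = W * (1 - X) * Wᵀ := by rw [hKX]
        _ = W * Wᵀ - W * X * Wᵀ := by
            rw [Matrix.mul_sub, Matrix.mul_one, Matrix.sub_mul]
    rw [add_mul, one_mul, Matrix.mul_sub, Matrix.mul_one, h2]
    abel
  · set Y := (cocKS m k cco)⁻¹ with hY
    have hKY : W * Wᵀ * Y = 1 - Y := by
      have h := Matrix.mul_nonsing_inv _ hdK'
      rw [← hY, hK', add_mul, one_mul] at h
      rw [eq_sub_iff_add_eq']
      exact h
    refine Matrix.inv_eq_right_inv ?_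
    rw [hK]
    have h2 : Wᵀ * W * (Wᵀ * Y * W) = Wᵀ * W - Wᵀ * Y * W := by
      calc Wᵀ * W * (Wᵀ * Y * W) = Wᵀ * (W * Wᵀ * Y) * W := by
            simp only [Matrix.mul_assoc]
        _ = Wᵀ * (1 - Y) * W := by rw [hKY]
        _ = Wᵀ * W - Wᵀ * Y * W := by
            rw [Matrix.mul_sub, Matrix.mul_one, Matrix.sub_mul]
    rw [add_mul, one_mul, Matrix.mul_sub, Matrix.mul_one, h2]
    abel
end

section
/- The change-of-basis operators Λ = Σ_μ e_μ e_μᵀ + Σ_α e_α c_αᵀ and *Λ = Σ_μ e_μ c_μᵀ + Σ_α e_α e_αᵀ (sums over cochord indices μ and chord indices α) satisfy Λ⁻¹ = (*Λ)ᵀ, i.e. (*Λ)ᵀ Λ = I = Λ (*Λ)ᵀ on ℝⁿ. -/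
open Matrix

/-- The change-of-basis operator `Λ = Σ_μ e_μ e_μᵀ + Σ_α e_α c_αᵀ`. -/
def lam (m k : ℕ) (ccy : Fin k → (Fin m ⊕ Fin k) → ℝ) :
    Matrix (Fin m ⊕ Fin k) (Fin m ⊕ Fin k) ℝ :=
  ∑ μ, vecMulVec (eCo m k μ) (eCo m k μ) + ∑ α, vecMulVec (eCh m k α) (ccy α)

/-- The dual change-of-basis operator `*Λ = Σ_μ e_μ c_μᵀ + Σ_α e_α e_αᵀ`. -/
def dualLam (m k : ℕ) (cco : Fin m → (Fin m ⊕ Fin k) → ℝ) :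
    Matrix (Fin m ⊕ Fin k) (Fin m ⊕ Fin k) ℝ :=
  ∑ μ, vecMulVec (eCo m k μ) (cco μ) + ∑ α, vecMulVec (eCh m k α) (eCh m k α)

lemma lam_inl (m k : ℕ) (ccy : Fin k → (Fin m ⊕ Fin k) → ℝ) (μ : Fin m) (i) :
    lam m k ccy (Sum.inl μ) i = eCo m k μ i := by
  rcases i with ν | β <;> simp [lam, Matrix.add_apply, Matrix.sum_apply, vecMulVec_apply, eCo, eCh,
    Pi.single_apply, Finset.sum_ite_eq', eq_comm]

lemma lam_inr (m k : ℕ) (ccy : Fin k → (Fin m ⊕ Fin k) → ℝ) (α : Fin k) (i) :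
    lam m k ccy (Sum.inr α) i = ccy α i := by
  simp [lam, Matrix.add_apply, Matrix.sum_apply, vecMulVec_apply, eCo, eCh,
    Pi.single_apply, Finset.sum_ite_eq', eq_comm]

lemma dualLam_inl (m k : ℕ) (cco : Fin m → (Fin m ⊕ Fin k) → ℝ) (μ : Fin m) (i) :
    dualLam m k cco (Sum.inl μ) i = cco μ i := by
  simp [dualLam, Matrix.add_apply, Matrix.sum_apply, vecMulVec_apply, eCo, eCh,
    Pi.single_apply, Finset.sum_ite_eq', eq_comm]

lemma dualLam_inr (m k : ℕ) (cco : Fin m → (Fin m ⊕ Fin k) → ℝ) (α : Fin k) (i) :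
    dualLam m k cco (Sum.inr α) i = eCh m k α i := by
  rcases i with ν | β <;> simp [dualLam, Matrix.add_apply, Matrix.sum_apply, vecMulVec_apply, eCo, eCh,
    Pi.single_apply, Finset.sum_ite_eq', eq_comm]

/-- The change-of-basis operators satisfy `Λ⁻¹ = (*Λ)ᵀ`, i.e. `(*Λ)ᵀ Λ = I = Λ (*Λ)ᵀ`. -/
theorem statement17 (m k : ℕ)
    (ccy : Fin k → (Fin m ⊕ Fin k) → ℝ) (cco : Fin m → (Fin m ⊕ Fin k) → ℝ)
    (hch : ∀ α α' : Fin k, eCh m k α ⬝ᵥ ccy α' = if α = α' then 1 else 0)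
    (hco : ∀ μ μ' : Fin m, eCo m k μ ⬝ᵥ cco μ' = if μ = μ' then 1 else 0)
    (hcc : ∀ (α : Fin k) (μ : Fin m), ccy α ⬝ᵥ cco μ = 0)
    :
    (dualLam m k cco)ᵀ * lam m k ccy = 1 ∧ lam m k ccy * (dualLam m k cco)ᵀ = 1 := by
  have hch' : ∀ α α' : Fin k, ccy α' (Sum.inr α) = if α = α' then 1 else 0 := by
    intro α α'
    simpa [eCh, single_dotProduct] using hch α α'
  have hco' : ∀ μ μ' : Fin m, cco μ' (Sum.inl μ) = if μ = μ' then 1 else 0 := by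
    intro μ μ'
    simpa [eCo, single_dotProduct] using hco μ μ'
  have h2 : lam m k ccy * (dualLam m k cco)ᵀ = 1 := by
    ext x y
    rcases x with μ | α <;> rcases y with μ' | α' <;>
      simp only [Matrix.mul_apply, Matrix.transpose_apply, lam_inl, lam_inr,
        dualLam_inl, dualLam_inr, Matrix.one_apply]
    · simpa [eCo, single_dotProduct, dotProduct, mul_comm, eq_comm] using hco μ μ'
    · simp [eCo, eCh, Pi.single_apply]
    · simpa [dotProduct] using hcc α μ'
    · have := hch' α' α
      simpa [eCh, Pi.single_apply, mul_comm, eq_comm, Sum.inr.injEq] using this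
  exact ⟨mul_eq_one_comm.mpr h2, h2⟩
end

section
/- For every vector j ∈ ℝⁿ, defining the tidal currents J ∈ ℝᵐ by J_μ = ⟨c_μ, j⟩ and the cycle circuitations F ∈ ℝᵏ by F_α = ⟨c_α, j⟩, the squared Euclidean norm of j decomposes as ⟨j, j⟩ = Jᵀ (*K)⁻¹ J + Fᵀ K⁻¹ F (the linear-regime entropy production formula). -/
open Matrix

/-!
Stack the cocycles and cycles as the rows of a square matrix `C`. The orthogonality of cycles
and cocycles makes the Gram matrix `C Cᵀ` block diagonal with blocks `*K` and `K`, and the duality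
relations with the standard basis make `*K` and `K` Gram matrices of linearly independent families,
hence positive definite. So `C` is invertible and `⟨j, j⟩ = (C j)ᵀ (C Cᵀ)⁻¹ (C j)`, which splits
along the two blocks.
-/

namespace Matrix

variable {ι κ n : Type*} [Fintype n]

theorem of_mul_transpose_of {R : Type*} [CommSemiring R] (v : ι → n → R) (w : κ → n → R) :
    of v * (of w)ᵀ = of fun i j => v i ⬝ᵥ w j := by
  ext i j
  rw [mul_apply']
  rfl

theorem posDef_gram_of_dual [Fintype ι] [DecidableEq ι] {v w : ι → n → ℝ}
    (hvw : ∀ i j, w i ⬝ᵥ v j = if i = j then 1 else 0) :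
    (of fun i j => v i ⬝ᵥ v j).PosDef := by
  have hright : of v * (of w)ᵀ = 1 := by
    ext i j
    rw [of_mul_transpose_of, of_apply, one_apply, dotProduct_comm]
    exact (hvw j i).trans (if_congr eq_comm rfl rfl)
  have hinj : Function.Injective (of v).vecMul := fun x y hxy => by
    simpa [vecMul_vecMul, hright] using congrArg (· ᵥ* (of w)ᵀ) hxy
  rw [← of_mul_transpose_of, ← conjTranspose_eq_transpose_of_trivial]
  exact PosDef.mul_conjTranspose_self _ hinj

theorem dotProduct_self_eq_of_isUnit_mul_transpose {R : Type*} [CommRing R] [DecidableEq n]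
    {C : Matrix n n R} (hC : IsUnit (C * Cᵀ)) (j : n → R) :
    j ⬝ᵥ j = (C *ᵥ j) ⬝ᵥ ((C * Cᵀ)⁻¹ *ᵥ (C *ᵥ j)) := by
  have hdet : IsUnit C.det := by
    rw [isUnit_iff_isUnit_det, det_mul] at hC
    exact isUnit_of_mul_isUnit_left hC
  rw [mul_inv_rev, mulVec_mulVec, Matrix.mul_assoc, nonsing_inv_mul _ hdet, Matrix.mul_one,
    dotProduct_mulVec, ← transpose_nonsing_inv, vecMul_transpose, mulVec_mulVec,
    nonsing_inv_mul _ hdet, one_mulVec]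

theorem fromRows_of_mul_transpose {R : Type*} [CommSemiring R] (v : ι → n → R) (w : κ → n → R)
    (hvw : ∀ j i, w j ⬝ᵥ v i = 0) :
    fromRows (of v) (of w) * (fromRows (of v) (of w))ᵀ =
      fromBlocks (of fun i i' => v i ⬝ᵥ v i') 0 0 (of fun j j' => w j ⬝ᵥ w j') := by
  have hvw' : (of fun i j => v i ⬝ᵥ w j) = 0 := by
    ext i j
    exact (dotProduct_comm _ _).trans (hvw j i)
  have hwv : (of fun j i => w j ⬝ᵥ v i) = 0 := by
    ext j i
    exact hvw j i
  rw [transpose_fromRows, fromRows_mul_fromCols]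
  simp only [of_mul_transpose_of, hvw', hwv]

end Matrix

/-- Linear-regime entropy production: for every `j ∈ ℝⁿ`, with tidal currents
`J_μ = ⟨c_μ, j⟩` and cycle circuitations `F_α = ⟨c_α, j⟩`, one has
`⟨j, j⟩ = Jᵀ (*K)⁻¹ J + Fᵀ K⁻¹ F`. -/
theorem statement18 (m k : ℕ)
    (ccy : Fin k → (Fin m ⊕ Fin k) → ℝ) (cco : Fin m → (Fin m ⊕ Fin k) → ℝ)
    (hch : ∀ α α' : Fin k, eCh m k α ⬝ᵥ ccy α' = if α = α' then 1 else 0)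
    (hco : ∀ μ μ' : Fin m, eCo m k μ ⬝ᵥ cco μ' = if μ = μ' then 1 else 0)
    (hcc : ∀ (α : Fin k) (μ : Fin m), ccy α ⬝ᵥ cco μ = 0)
    :
    ∀ j : (Fin m ⊕ Fin k) → ℝ,
      j ⬝ᵥ j =
        (fun μ => cco μ ⬝ᵥ j) ⬝ᵥ ((cocKS m k cco)⁻¹ *ᵥ fun μ => cco μ ⬝ᵥ j) +
        (fun α => ccy α ⬝ᵥ j) ⬝ᵥ ((cycKS m k ccy)⁻¹ *ᵥ fun α => ccy α ⬝ᵥ j) := by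
  intro j
  set C := fromRows (of cco) (of ccy)
  have hgram : C * Cᵀ = fromBlocks (cocKS m k cco) 0 0 (cycKS m k ccy) :=
    fromRows_of_mul_transpose cco ccy hcc
  have hcoc : (cocKS m k cco).PosDef := posDef_gram_of_dual hco
  have hcyc : (cycKS m k ccy).PosDef := posDef_gram_of_dual hch
  have hunit : IsUnit (C * Cᵀ) := by
    rw [hgram, isUnit_fromBlocks_zero₁₂]
    exact ⟨hcoc.isUnit, hcyc.isUnit⟩
  rw [dotProduct_self_eq_of_isUnit_mul_transpose hunit j, hgram,
    inv_fromBlocks_zero₁₂_of_isUnit_iff _ _ _ (iff_of_true hcoc.isUnit hcyc.isUnit),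
    fromRows_mulVec, fromBlocks_mulVec, sumElim_dotProduct_sumElim]
  simp only [Matrix.mul_zero, Matrix.zero_mul, neg_zero, zero_mulVec, zero_add, add_zero,
    Sum.elim_comp_inl, Sum.elim_comp_inr]
  rfl
end

section
/- If m = k (in the graph setting: if the number of edges equals 2|V| − 2), then the two Kirchhoff–Symanzik matrices K and *K have the same characteristic polynomial, hence the same spectrum with multiplicities; being symmetric (diagonalizable), they are similar matrices. -/
/-! In the splitting `ℝⁿ = ℝ^m ⊕ ℝ^k`, the orthogonality relations force `c_μ = (e_μ, ω_μ)` and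
`c_α = (-ωᵀ_α, e_α)`, where `ω` is the superposition matrix; hence `*K = 1 + ω ωᵀ` and
`K = 1 + ωᵀ ω`. For square `ω` these have the same characteristic polynomial because `ω ωᵀ` and
`ωᵀ ω` do. Symmetric matrices with equal characteristic polynomials have the same sorted
eigenvalues, so they are conjugate by an orthogonal matrix. -/

open Matrix

namespace Matrix

variable {n : Type*} [Fintype n] [DecidableEq n]

theorem charpoly_one_add_mul_comm {R : Type*} [CommRing R] (A B : Matrix n n R) :
    (1 + A * B).charpoly = (1 + B * A).charpoly := by
  have shift : ∀ M : Matrix n n R, 1 + M = M - scalar n (-1 : R) := fun M => by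
    rw [map_neg, scalar_apply, diagonal_one, sub_neg_eq_add, add_comm]
  rw [shift, shift, charpoly_sub_scalar, charpoly_sub_scalar, charpoly_mul_comm]

namespace IsHermitian

open Unitary

variable {𝕜 : Type*} [RCLike 𝕜] {A B : Matrix n n 𝕜}

theorem exists_unitary_eq_conj_of_charpoly_eq (hA : A.IsHermitian) (hB : B.IsHermitian)
    (h : A.charpoly = B.charpoly) :
    ∃ u : unitary (Matrix n n 𝕜), A = conjStarAlgAut 𝕜 _ u B := by
  refine ⟨hA.eigenvectorUnitary * star hB.eigenvectorUnitary, ?_⟩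
  rw [conjStarAlgAut_mul_apply, hB.conjStarAlgAut_star_eigenvectorUnitary,
    ← (hA.eigenvalues_eq_eigenvalues_iff hB).mpr h, ← hA.spectral_theorem]

theorem exists_isUnit_det_eq_mul_mul_inv_of_charpoly_eq (hA : A.IsHermitian)
    (hB : B.IsHermitian) (h : A.charpoly = B.charpoly) :
    ∃ S : Matrix n n 𝕜, IsUnit S.det ∧ A = S * B * S⁻¹ := by
  obtain ⟨u, rfl⟩ := hA.exists_unitary_eq_conj_of_charpoly_eq hB h
  have hu : (u : Matrix n n 𝕜) * star (u : Matrix n n 𝕜) = 1 := Unitary.mul_star_self_of_mem u.2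
  refine ⟨u, isUnit_det_of_right_inverse hu, ?_⟩
  rw [conjStarAlgAut_apply, inv_eq_right_inv hu]

end IsHermitian

end Matrix

section KirchhoffSymanzik

variable {m k : ℕ} {ccy : Fin k → (Fin m ⊕ Fin k) → ℝ} {cco : Fin m → (Fin m ⊕ Fin k) → ℝ}

theorem cocycle_eq_sumElim (hco : ∀ μ μ' : Fin m, eCo m k μ ⬝ᵥ cco μ' = if μ = μ' then 1 else 0)
    (μ : Fin m) : cco μ = Sum.elim (Pi.single μ 1) (supMat m k cco μ) := by
  funext ν
  rcases ν with ν | α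
  · simpa [eCo, single_dotProduct, Pi.single_apply] using hco ν μ
  · exact (supMat_apply μ α).symm

theorem cycle_eq_sumElim (hch : ∀ α α' : Fin k, eCh m k α ⬝ᵥ ccy α' = if α = α' then 1 else 0)
    (hco : ∀ μ μ' : Fin m, eCo m k μ ⬝ᵥ cco μ' = if μ = μ' then 1 else 0)
    (hcc : ∀ (α : Fin k) (μ : Fin m), ccy α ⬝ᵥ cco μ = 0) (α : Fin k) :
    ccy α = Sum.elim (fun μ => -supMat m k cco μ α) (Pi.single α 1) := by
  have hchord : ccy α ∘ Sum.inr = Pi.single α 1 := by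
    funext β
    simpa [eCh, single_dotProduct, Pi.single_apply] using hch β α
  funext ν
  rcases ν with μ | β
  · have := hcc α μ
    rw [← Sum.elim_comp_inl_inr (ccy α), hchord, cocycle_eq_sumElim hco,
      sumElim_dotProduct_sumElim, dotProduct_single, single_dotProduct, mul_one, one_mul,
      Function.comp_apply] at this
    rw [Sum.elim_inl]
    linarith
  · exact congrFun hchord β

theorem cocKS_isHermitian : (cocKS m k cco).IsHermitian := by
  ext μ μ'
  simp [cocKS, dotProduct_comm]

theorem cycKS_isHermitian : (cycKS m k ccy).IsHermitian := by
  ext α α'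
  simp [cycKS, dotProduct_comm]

end KirchhoffSymanzik

/-- If `m = k` then `K` and `*K` have the same characteristic polynomial (hence the same
spectrum with multiplicities) and, being diagonalizable, they are similar matrices. -/
theorem statement19 (m k : ℕ)
    (ccy : Fin k → (Fin m ⊕ Fin k) → ℝ) (cco : Fin m → (Fin m ⊕ Fin k) → ℝ)
    (hch : ∀ α α' : Fin k, eCh m k α ⬝ᵥ ccy α' = if α = α' then 1 else 0)
    (hco : ∀ μ μ' : Fin m, eCo m k μ ⬝ᵥ cco μ' = if μ = μ' then 1 else 0)
    (hcc : ∀ (α : Fin k) (μ : Fin m), ccy α ⬝ᵥ cco μ = 0)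
    (h : m = k) :
    (cocKS m k cco).charpoly = (cycKS m k ccy).charpoly ∧
    ∃ S : Matrix (Fin k) (Fin k) ℝ, IsUnit S.det ∧
      Matrix.reindex (finCongr h) (finCongr h) (cocKS m k cco) =
        S * cycKS m k ccy * S⁻¹ := by
  subst h
  have hchar : (cocKS m m cco).charpoly = (cycKS m m ccy).charpoly := by
    rw [cocKS_eq_one_add_mul_transpose hco, cycKS_eq_one_add_transpose_mul hch hco hcc]
    exact charpoly_one_add_mul_comm _ _
  refine ⟨hchar, ?_⟩
  rw [finCongr_refl, reindex_refl_refl]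
  exact cocKS_isHermitian.exists_isUnit_det_eq_mul_mul_inv_of_charpoly_eq cycKS_isHermitian hchar
end
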